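/- arXiv:1701.08017 — 7 statements merged into one kernel-verified Lean document; each statement's English description precedes it below -/
import Mathlib

section
/- Suppose that for every i < n the function x ↦ ∫₀ˣ |A_{i,i+1}(t)| dt is strictly increasing on [0,1]. Then the natural embedding Y ↦ Y₀ of W_{1,A}^n[0,1] into C[0,1] is injective: if Y ∈ W_{1,A}^n[0,1] satisfies Y₀(x) = 0 for all x ∈ [0,1], then Y_i(x) = 0 for all i < n and all x ∈ [0,1], and Y_n(x) = 0 for almost every x with A_{n−1,n}(x) ≠ 0. -/
open MeasureTheory Set
noncomputable section

lemma aux_ae_zero {f : ℝ → ℂ} (hf : IntegrableOn f (Set.Icc 0 1))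
    (h : ∀ x ∈ Set.Icc (0:ℝ) 1, ∫ t in (0:ℝ)..x, f t = 0) :
    ∀ᵐ x ∂(volume.restrict (Set.Icc (0:ℝ) 1)), f x = 0 := by
  set f' : ℝ → ℂ := (Set.Icc (0:ℝ) 1).indicator f with hf'def
  have hf'int : Integrable f' := by
    rwa [integrable_indicator_iff measurableSet_Icc]
  have H := IsUnifLocDoublingMeasure.ae_tendsto_average (μ := (volume : Measure ℝ))
    hf'int.locallyIntegrable 1
  have key : ∀ᵐ x ∂(volume : Measure ℝ), x ∈ Set.Ioo (0:ℝ) 1 → f x = 0 := by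
    filter_upwards [H] with x hx hxI
    have hev : ∀ᶠ j in nhdsWithin (0:ℝ) (Set.Ioi 0), x ∈ Metric.closedBall x (1 * j) := by
      filter_upwards [self_mem_nhdsWithin] with j hj
      rw [one_mul]
      exact Metric.mem_closedBall_self (le_of_lt hj)
    have hlim := hx (fun _ : ℝ => x) id Filter.tendsto_id hev
    set ε : ℝ := min x (1 - x) with hε
    have hε0 : 0 < ε := lt_min hxI.1 (by linarith [hxI.2])
    have hzero : ∀ᶠ j in nhdsWithin (0:ℝ) (Set.Ioi 0),
        (⨍ y in Metric.closedBall x j, f' y ∂volume) = 0 := by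
      have : Set.Ioo (0:ℝ) ε ∈ nhdsWithin (0:ℝ) (Set.Ioi 0) :=
        Ioo_mem_nhdsGT_of_mem ⟨le_refl _, hε0⟩
      filter_upwards [this] with j hj
      obtain ⟨hj0, hjε⟩ := hj
      have hj1 : j < x := lt_of_lt_of_le hjε (min_le_left _ _)
      have hj2 : x + j < 1 := by
        have := lt_of_lt_of_le hjε (min_le_right _ _); linarith
      have hsub : Set.Icc (x - j) (x + j) ⊆ Set.Icc (0:ℝ) 1 :=
        Set.Icc_subset_Icc (by linarith) (by linarith)
      have hIcc : (∫ y in Set.Icc (x - j) (x + j), f' y) = 0 := by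
        rw [setIntegral_congr_fun measurableSet_Icc
          (fun y hy => Set.indicator_of_mem (hsub hy) f),
          setIntegral_congr_set (Ioc_ae_eq_Icc).symm,
          ← intervalIntegral.integral_of_le (by linarith : x - j ≤ x + j)]
        have hi1 : IntervalIntegrable f volume 0 (x - j) := by
          apply IntegrableOn.intervalIntegrable
          apply hf.mono_set
          rw [Set.uIcc_of_le (by linarith : (0:ℝ) ≤ x - j)]
          exact Set.Icc_subset_Icc le_rfl (by linarith)
        have hi2 : IntervalIntegrable f volume 0 (x + j) := by
          apply IntegrableOn.intervalIntegrable
          apply hf.mono_set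
          rw [Set.uIcc_of_le (by linarith : (0:ℝ) ≤ x + j)]
          exact Set.Icc_subset_Icc le_rfl (by linarith)
        rw [← intervalIntegral.integral_interval_sub_left hi2 hi1,
          h (x + j) ⟨by linarith, by linarith⟩, h (x - j) ⟨by linarith, by linarith⟩, sub_zero]
      rw [setAverage_eq, Real.closedBall_eq_Icc, hIcc, smul_zero]
    have hlim0 : Filter.Tendsto (fun j => ⨍ y in Metric.closedBall x j, f' y ∂volume)
        (nhdsWithin (0:ℝ) (Set.Ioi 0)) (nhds 0) :=
      (Filter.tendsto_congr' hzero).2 tendsto_const_nhds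
    have : f' x = 0 := tendsto_nhds_unique hlim hlim0
    rwa [hf'def, Set.indicator_of_mem (Set.Ioo_subset_Icc_self hxI)] at this
  rw [← Measure.restrict_congr_set Ioo_ae_eq_Icc]
  filter_upwards [ae_restrict_mem measurableSet_Ioo, ae_restrict_of_ae key] with x h1 h2
  exact h2 h1

def MemW (A : ℕ → ℕ → ℝ → ℂ) (s : ℝ) (n : ℕ) (Y : ℕ → ℝ → ℂ) : Prop :=
  (∀ i < n, ContinuousOn (Y i) (Set.Icc 0 1)) ∧
  AEMeasurable (Y n) (volume.restrict (Set.Icc 0 1)) ∧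
  IntegrableOn (fun x => ‖A (n-1) n x‖ * ‖Y n x‖ ^ s) (Set.Icc 0 1) ∧
  (∀ i < n, IntegrableOn (fun t => ∑ j ∈ Finset.range (i+2), A i j t * Y j t) (Set.Icc 0 1)) ∧
  (∀ i < n, ∀ x ∈ Set.Icc (0:ℝ) 1,
    Y i x = Y i 0 + ∫ t in (0:ℝ)..x, ∑ j ∈ Finset.range (i+2), A i j t * Y j t)

theorem stmt0 (n : ℕ) (hn : 1 ≤ n) (A : ℕ → ℕ → ℝ → ℂ)
    (hA : ∀ i j, IntegrableOn (A i j) (Set.Icc 0 1))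
    (hmono : ∀ i < n, StrictMonoOn (fun x => ∫ t in (0:ℝ)..x, ‖A i (i+1) t‖) (Set.Icc 0 1))
    (Y : ℕ → ℝ → ℂ) (hY : MemW A 1 n Y)
    (hY0 : ∀ x ∈ Set.Icc (0:ℝ) 1, Y 0 x = 0) :
    (∀ i < n, ∀ x ∈ Set.Icc (0:ℝ) 1, Y i x = 0) ∧
    (∀ᵐ x ∂(volume.restrict (Set.Icc 0 1)), A (n-1) n x ≠ 0 → Y n x = 0) := by
  obtain ⟨hcont, _hmeas, _hint, hintsum, heq⟩ := hY
  have step : ∀ i < n, (∀ j ≤ i, ∀ x ∈ Set.Icc (0:ℝ) 1, Y j x = 0) →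
      ∀ᵐ x ∂(volume.restrict (Set.Icc (0:ℝ) 1)), A i (i+1) x * Y (i+1) x = 0 := by
    intro i hi hz
    have hfz := aux_ae_zero (hintsum i hi) (fun x hx => by
      have h0mem : (0:ℝ) ∈ Set.Icc (0:ℝ) 1 := ⟨le_refl 0, zero_le_one⟩
      have := heq i hi x hx
      rw [hz i le_rfl x hx, hz i le_rfl 0 h0mem, zero_add] at this
      exact this.symm)
    filter_upwards [hfz, ae_restrict_mem measurableSet_Icc] with x hfx hxI
    have hsum : ∑ j ∈ Finset.range (i+2), A i j x * Y j x
        = A i (i+1) x * Y (i+1) x := by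
      rw [Finset.sum_range_succ]
      have hz0 : ∑ j ∈ Finset.range (i+1), A i j x * Y j x = 0 := by
        apply Finset.sum_eq_zero
        intro j hj
        rw [hz j (Nat.lt_succ_iff.mp (Finset.mem_range.mp hj)) x hxI, mul_zero]
      rw [hz0, zero_add]
    rw [← hsum]; exact hfx
  have main : ∀ i, i < n → ∀ x ∈ Set.Icc (0:ℝ) 1, Y i x = 0 := by
    intro i
    induction i using Nat.strong_induction_on with
    | _ i ih =>
      cases i with
      | zero => exact fun _ => hY0
      | succ k =>
        intro hk x hx
        have hkn : k < n := Nat.lt_of_succ_lt hk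
        have hz : ∀ j ≤ k, ∀ y ∈ Set.Icc (0:ℝ) 1, Y j y = 0 := fun j hj =>
          ih j (Nat.lt_succ_of_le hj) (lt_trans (Nat.lt_succ_of_le hj) hk)
        have hae := step k hkn hz
        by_contra hne
        have hc : ContinuousWithinAt (Y (k+1)) (Set.Icc 0 1) x := hcont (k+1) hk x hx
        have hne' : {z : ℂ | z ≠ 0} ∈ nhds (Y (k+1) x) :=
          isOpen_compl_singleton.mem_nhds hne
        have hev : ∀ᶠ y in nhdsWithin x (Set.Icc 0 1), Y (k+1) y ≠ 0 := hc hne'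
        obtain ⟨ε, hε, hball⟩ := Metric.mem_nhdsWithin_iff.mp hev
        set a : ℝ := max 0 (x - ε/2) with ha_def
        set b : ℝ := min 1 (x + ε/2) with hb_def
        have hab : a < b := by
          rcases eq_or_lt_of_le hx.1 with h0 | h0
          · have haz : a = 0 := max_eq_left (by linarith)
            have : (0:ℝ) < b := lt_min (by norm_num) (by linarith)
            rw [haz]; exact this
          · have h1 : a < x := max_lt h0 (by linarith)
            have h2 : x ≤ b := le_min hx.2 (by linarith)
            linarith
        have hsubI : Set.Icc a b ⊆ Set.Icc (0:ℝ) 1 :=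
          Set.Icc_subset_Icc (le_max_left _ _) (min_le_left _ _)
        have hYne : ∀ y ∈ Set.Icc a b, Y (k+1) y ≠ 0 := by
          intro y hy
          apply hball
          have h1 : x - ε/2 ≤ a := le_max_right _ _
          have h2 : b ≤ x + ε/2 := min_le_right _ _
          refine ⟨?_, hsubI hy⟩
          rw [Metric.mem_ball, Real.dist_eq, abs_sub_lt_iff]
          constructor <;> [linarith [hy.2]; linarith [hy.1]]
        have hAzero : ∀ᵐ y ∂(volume.restrict (Set.Icc a b)), ‖A k (k+1) y‖ = 0 := by
          filter_upwards [ae_restrict_of_ae_restrict_of_subset hsubI hae,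
            ae_restrict_mem measurableSet_Icc] with y h1 h2
          rcases mul_eq_zero.mp h1 with h | h
          · simpa using h
          · exact absurd h (hYne y h2)
        have hint0 : (∫ y in a..b, ‖A k (k+1) y‖) = 0 := by
          rw [intervalIntegral.integral_of_le hab.le,
            setIntegral_congr_set Ioc_ae_eq_Icc]
          exact integral_eq_zero_of_ae hAzero
        have ha : a ∈ Set.Icc (0:ℝ) 1 := hsubI (Set.left_mem_Icc.mpr hab.le)
        have hb : b ∈ Set.Icc (0:ℝ) 1 := hsubI (Set.right_mem_Icc.mpr hab.le)
        have hlt := hmono k hkn ha hb hab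
        have hnorm : IntegrableOn (fun t => ‖A k (k+1) t‖) (Set.Icc 0 1) :=
          (hA k (k+1)).norm
        have hii1 : IntervalIntegrable (fun t => ‖A k (k+1) t‖) volume 0 a := by
          apply IntegrableOn.intervalIntegrable
          apply hnorm.mono_set
          rw [Set.uIcc_of_le ha.1]
          exact Set.Icc_subset_Icc le_rfl ha.2
        have hii2 : IntervalIntegrable (fun t => ‖A k (k+1) t‖) volume a b := by
          apply IntegrableOn.intervalIntegrable
          apply hnorm.mono_set
          rw [Set.uIcc_of_le hab.le]
          exact hsubI
        have hadd := intervalIntegral.integral_add_adjacent_intervals hii1 hii2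
        rw [hint0, add_zero] at hadd
        simp only at hlt
        rw [hadd] at hlt
        exact lt_irrefl _ hlt
  refine ⟨fun i hi => main i hi, ?_⟩
  have hz : ∀ j ≤ n-1, ∀ x ∈ Set.Icc (0:ℝ) 1, Y j x = 0 := fun j hj =>
    main j (by omega)
  have hae := step (n-1) (by omega) hz
  have hkey : (n-1)+1 = n := by omega
  rw [hkey] at hae
  filter_upwards [hae] with x hx hAx
  exact (mul_eq_zero.mp hx).resolve_left hAx
end
end

section
/- Every Y ∈ W_{1,A}^n[0,1] is recovered from its last component and its initial values: for every i < n and every x ∈ [0,1], Y_i(x) = Σ_{j=0}^{n−1} M_{ij}(x) · ( Y_j(0) + ∫₀ˣ A_{n−1,n}(t) (M(t)⁻¹)_{j,n−1} Y_n(t) dt ). -/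
/-!
With `c(x) = Y(0) + ∫₀ˣ A_{n-1,n} M⁻¹ e_{n-1} Y_n`, the product rule for primitives of integrable
functions (a Fubini computation) shows that `M c` solves `u = u(0) + ∫ (ã u + A_{n-1,n} Y_n e_{n-1})`,
because `M' = ã M` and `M c' = A_{n-1,n} Y_n e_{n-1}`. The first `n` components of `Y` solve the
same linear Volterra system with the same initial value (`M 0 = 1`), so their difference solves the
homogeneous system, and an integral Grönwall inequality makes it vanish.
-/

open MeasureTheory Set
noncomputable section

/-- The truncated coefficient matrix `ã`. -/
def Atld (n : ℕ) (A : ℕ → ℕ → ℝ → ℂ) (i k : Fin n) : ℝ → ℂ :=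
  if (k : ℕ) ≤ min (n - 1) ((i : ℕ) + 1) then A i k else 0

/-- `M` is the absolutely continuous matrix solution of `M' = ã·M` a.e. with `M 0 = Id`. -/
def ACsol (n : ℕ) (A : ℕ → ℕ → ℝ → ℂ) (M : ℝ → Matrix (Fin n) (Fin n) ℂ) : Prop :=
  M 0 = 1 ∧
  (∀ i j : Fin n, ContinuousOn (fun x => M x i j) (Set.Icc 0 1)) ∧
  (∀ i j : Fin n,
    IntegrableOn (fun t => ∑ k : Fin n, Atld n A i k t * M t k j) (Set.Icc 0 1)) ∧
  (∀ i j : Fin n, ∀ x ∈ Set.Icc (0:ℝ) 1,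
    M x i j = M 0 i j + ∫ t in (0:ℝ)..x, ∑ k : Fin n, Atld n A i k t * M t k j)

theorem uIcc_subset_Icc_of_mem {a b x : ℝ} (hx : x ∈ Icc a b) : uIcc a x ⊆ Icc a b :=
  uIcc_subset_Icc (left_mem_Icc.2 (hx.1.trans hx.2)) hx

section Primitive

variable {𝕜 : Type*} [RCLike 𝕜] {a b : ℝ}

theorem integral_primitive_mul_add_mul_primitive {f g : ℝ → 𝕜} (hab : a ≤ b)
    (hf : IntervalIntegrable f volume a b) (hg : IntervalIntegrable g volume a b) :
    ∫ t in a..b, ((∫ s in a..t, f s) * g t + f t * ∫ s in a..t, g s) =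
      (∫ s in a..b, f s) * ∫ s in a..b, g s := by
  set μ := volume.restrict (Ioc a b)
  have hf' : Integrable f μ := (intervalIntegrable_iff_integrableOn_Ioc_of_le hab).1 hf
  have hg' : Integrable g μ := (intervalIntegrable_iff_integrableOn_Ioc_of_le hab).1 hg
  set F : ℝ × ℝ → 𝕜 := fun p => f p.1 * g p.2
  have hF : Integrable F (μ.prod μ) := hf'.mul_prod hg'
  have hle : MeasurableSet {p : ℝ × ℝ | p.1 ≤ p.2} := measurableSet_le measurable_fst measurable_snd
  have hlt : MeasurableSet {p : ℝ × ℝ | p.2 < p.1} := measurableSet_lt measurable_snd measurable_fst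
  -- `∫ s in a..t` is the integral over `s ≤ t`, but also over `s < t`: the two regions below
  -- then tile the square exactly, with no diagonal to discard.
  have primitive_le : ∀ t ∈ Ioc a b, ∫ s in a..t, f s = ∫ s, {s | s ≤ t}.indicator f s ∂μ :=
    fun t ht => by
      rw [← intervalIntegral.integral_indicator ⟨ht.1.le, ht.2⟩, intervalIntegral.integral_of_le hab]
  have primitive_lt : ∀ t ∈ Ioc a b, ∫ s in a..t, g s = ∫ s, (Iio t).indicator g s ∂μ :=
    fun t ht => by
      rw [intervalIntegral.integral_of_le ht.1.le, integral_Ioc_eq_integral_Ioo,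
        integral_indicator measurableSet_Iio, Measure.restrict_restrict measurableSet_Iio]
      congr 2
      ext s
      simp only [mem_inter_iff, mem_Iio, mem_Ioc, mem_Ioo]
      exact ⟨fun h => ⟨h.2, h.1, h.2.le.trans ht.2⟩, fun h => ⟨h.2.1, h.1⟩⟩
  have h₁ : ∫ t in a..b, (∫ s in a..t, f s) * g t =
      ∫ p, {p : ℝ × ℝ | p.1 ≤ p.2}.indicator F p ∂(μ.prod μ) := by
    rw [integral_prod_symm _ (hF.indicator hle), intervalIntegral.integral_of_le hab]
    refine setIntegral_congr_fun measurableSet_Ioc fun t ht => ?_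
    rw [primitive_le t ht, ← integral_mul_const]
    congr 1 with s
    by_cases hs : s ≤ t <;> simp [F, hs]
  have h₂ : ∫ t in a..b, f t * ∫ s in a..t, g s =
      ∫ p, {p : ℝ × ℝ | p.2 < p.1}.indicator F p ∂(μ.prod μ) := by
    rw [integral_prod _ (hF.indicator hlt), intervalIntegral.integral_of_le hab]
    refine setIntegral_congr_fun measurableSet_Ioc fun t ht => ?_
    rw [primitive_lt t ht, ← integral_const_mul]
    congr 1 with s
    by_cases hs : s < t <;> simp [F, hs]
  have hfg : IntervalIntegrable (fun t => (∫ s in a..t, f s) * g t) volume a b :=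
    hg.continuousOn_mul (intervalIntegral.continuousOn_primitive_interval' hf left_mem_uIcc)
  have hgf : IntervalIntegrable (fun t => f t * ∫ s in a..t, g s) volume a b :=
    hf.mul_continuousOn (intervalIntegral.continuousOn_primitive_interval' hg left_mem_uIcc)
  rw [intervalIntegral.integral_add hfg hgf, h₁, h₂,
    ← integral_add (hF.indicator hle) (hF.indicator hlt), intervalIntegral.integral_of_le hab,
    intervalIntegral.integral_of_le hab, ← integral_prod_mul]
  congr 1 with p
  by_cases hp : p.1 ≤ p.2
  · simp [hp, not_lt.2 hp, F]
  · simp [hp, not_le.1 hp, F]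

theorem integral_deriv_mul_eq_sub_of_eq_primitive {u v u' v' : ℝ → 𝕜}
    (hu' : IntervalIntegrable u' volume a b) (hv' : IntervalIntegrable v' volume a b)
    (hu : ∀ x ∈ Icc a b, u x = u a + ∫ t in a..x, u' t)
    (hv : ∀ x ∈ Icc a b, v x = v a + ∫ t in a..x, v' t) :
    ∀ x ∈ Icc a b, ∫ t in a..x, (u' t * v t + u t * v' t) = u x * v x - u a * v a := by
  intro x hx
  have hsub := uIcc_subset_Icc_of_mem hx
  have hu'x := hu'.mono_set (uIcc_subset_uIcc_left (Icc_subset_uIcc hx))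
  have hv'x := hv'.mono_set (uIcc_subset_uIcc_left (Icc_subset_uIcc hx))
  have hsplit : EqOn (fun t => u' t * v t + u t * v' t)
      (fun t => (u' t * v a + u a * v' t) +
        ((∫ s in a..t, u' s) * v' t + u' t * ∫ s in a..t, v' s)) (uIcc a x) := by
    intro t ht
    simp only
    rw [hu t (hsub ht), hv t (hsub ht)]
    ring
  rw [intervalIntegral.integral_congr hsplit,
    intervalIntegral.integral_add ((hu'x.mul_const _).add (hv'x.const_mul _))
      ((hv'x.continuousOn_mul
        (intervalIntegral.continuousOn_primitive_interval' hu'x left_mem_uIcc)).add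
      (hu'x.mul_continuousOn
        (intervalIntegral.continuousOn_primitive_interval' hv'x left_mem_uIcc))),
    intervalIntegral.integral_add (hu'x.mul_const _) (hv'x.const_mul _),
    intervalIntegral.integral_mul_const, intervalIntegral.integral_const_mul,
    integral_primitive_mul_add_mul_primitive hx.1 hu'x hv'x, hu x hx, hv x hx]
  ring

theorem continuousOn_of_eq_primitive {u u' : ℝ → 𝕜} (hab : a ≤ b)
    (hu' : IntervalIntegrable u' volume a b)
    (hu : ∀ x ∈ Icc a b, u x = u a + ∫ t in a..x, u' t) : ContinuousOn u (Icc a b) := by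
  have h := (continuousOn_const (c := u a)).add
    (intervalIntegral.continuousOn_primitive_interval' hu' left_mem_uIcc)
  rw [uIcc_of_le hab] at h
  exact h.congr hu

end Primitive

section Gronwall

variable {a b : ℝ} {k : ℝ → ℝ}

theorem integral_mul_primitive_pow (hk : IntervalIntegrable k volume a b) (m : ℕ) :
    ∀ x ∈ Icc a b,
      ∫ t in a..x, k t * (∫ s in a..t, k s) ^ m = (∫ s in a..x, k s) ^ (m + 1) / (m + 1) := by
  set K : ℝ → ℝ := fun x => ∫ s in a..x, k s
  have hKc : ContinuousOn K (uIcc a b) :=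
    intervalIntegral.continuousOn_primitive_interval' hk left_mem_uIcc
  induction m with
  | zero => intro x _; simp
  | succ m ih =>
    intro x hx
    have hu : ∀ y ∈ Icc a b,
        K y ^ (m + 1) = K a ^ (m + 1) + ∫ t in a..y, ((m : ℝ) + 1) * (k t * K t ^ m) := by
      intro y hy
      rw [intervalIntegral.integral_const_mul, ih y hy]
      field_simp
      simp [K]
    have hv : ∀ y ∈ Icc a b, K y = K a + ∫ t in a..y, k t := fun y _ => by simp [K]
    have key : ((m : ℝ) + 2) * ∫ t in a..x, k t * K t ^ (m + 1) = K x ^ (m + 2) := by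
      rw [← intervalIntegral.integral_const_mul]
      convert integral_deriv_mul_eq_sub_of_eq_primitive
        ((hk.mul_continuousOn (hKc.pow m)).const_mul _) hk hu hv x hx using 1
      · congr 1 with t
        simp only [Pi.pow_apply]
        ring
      · simp [K]
        ring
    push_cast
    field_simp
    linear_combination key

theorem le_zero_of_le_integral_mul {r : ℝ → ℝ} (hk : IntervalIntegrable k volume a b)
    (hk0 : ∀ t ∈ Icc a b, 0 ≤ k t) (hr : ContinuousOn r (Icc a b))
    (hle : ∀ x ∈ Icc a b, r x ≤ ∫ t in a..x, k t * r t) :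
    ∀ x ∈ Icc a b, r x ≤ 0 := by
  obtain ⟨C, hC⟩ := isCompact_Icc.bddAbove_image hr
  set K : ℝ → ℝ := fun x => ∫ s in a..x, k s
  have hKc : ContinuousOn K (Icc a b) :=
    (intervalIntegral.continuousOn_primitive_interval' hk left_mem_uIcc).mono Icc_subset_uIcc
  -- iterating the inequality bounds `r x` by each term of the series of `C * exp (K x)`
  have bound : ∀ m : ℕ, ∀ x ∈ Icc a b, r x ≤ C * (K x ^ m / m.factorial) := by
    intro m
    induction m with
    | zero => intro x hx; simpa using hC (mem_image_of_mem r hx)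
    | succ m ih =>
      intro x hx
      have hsub := uIcc_subset_Icc_of_mem hx
      have hkx := hk.mono_set (uIcc_subset_uIcc_left (Icc_subset_uIcc hx))
      calc r x ≤ ∫ t in a..x, k t * r t := hle x hx
        _ ≤ ∫ t in a..x, k t * (C * (K t ^ m / m.factorial)) := by
          refine intervalIntegral.integral_mono_on hx.1 (hkx.mul_continuousOn (hr.mono hsub))
            (hkx.mul_continuousOn ?_) fun t ht => ?_
          · exact (continuousOn_const.mul ((hKc.pow m).div_const _)).mono hsub
          · have ht' := hsub (uIcc_of_le hx.1 ▸ ht)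
            exact mul_le_mul_of_nonneg_left (ih t ht') (hk0 t ht')
        _ = C / m.factorial * ∫ t in a..x, k t * K t ^ m := by
          rw [← intervalIntegral.integral_const_mul]
          congr 1 with t
          ring
        _ = C * (K x ^ (m + 1) / (m + 1).factorial) := by
          rw [integral_mul_primitive_pow hk m x hx, Nat.factorial_succ]
          push_cast
          field_simp
          rfl
  intro x hx
  have hlim := (FloorSemiring.tendsto_pow_div_factorial_atTop (K x)).const_mul C
  rw [mul_zero] at hlim
  exact ge_of_tendsto' hlim fun m => bound m x hx

end Gronwall

section LinearSystem

variable {ι 𝕜 : Type*} [Fintype ι] [RCLike 𝕜] {a b : ℝ} {P : ι → ι → ℝ → 𝕜}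

theorem IntervalIntegrable.fun_sum {μ : Measure ℝ} {f : ι → ℝ → 𝕜}
    (hf : ∀ i, IntervalIntegrable (f i) μ a b) :
    IntervalIntegrable (fun t => ∑ i, f i t) μ a b := by
  simpa only [Finset.sum_fn] using IntervalIntegrable.sum Finset.univ fun i _ => hf i

theorem eq_zero_of_eq_integral_linear (hP : ∀ i k, IntervalIntegrable (P i k) volume a b)
    {z : ι → ℝ → 𝕜} (hz : ∀ i, ContinuousOn (z i) (Icc a b))
    (hz_eq : ∀ i, ∀ x ∈ Icc a b, z i x = ∫ t in a..x, ∑ k, P i k t * z k t) :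
    ∀ i, ∀ x ∈ Icc a b, z i x = 0 := by
  set r : ℝ → ℝ := fun x => ∑ i, ‖z i x‖
  have hr : ContinuousOn r (Icc a b) := continuousOn_finsetSum _ fun i _ => (hz i).norm
  have hz_le_r : ∀ k x, ‖z k x‖ ≤ r x := fun k x =>
    Finset.single_le_sum (fun j _ => norm_nonneg (z j x)) (Finset.mem_univ k)
  have hP_norm : ∀ i, IntervalIntegrable (fun t => ∑ k, ‖P i k t‖) volume a b :=
    fun i => IntervalIntegrable.fun_sum fun k => (hP i k).norm
  have hle : ∀ x ∈ Icc a b, r x ≤ ∫ t in a..x, (∑ i, ∑ k, ‖P i k t‖) * r t := by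
    intro x hx
    have hint : ∀ i, IntervalIntegrable (fun t => (∑ k, ‖P i k t‖) * r t) volume a x := fun i =>
      ((hP_norm i).mono_set (uIcc_subset_uIcc_left (Icc_subset_uIcc hx))).mul_continuousOn
        (hr.mono (uIcc_subset_Icc_of_mem hx))
    calc r x = ∑ i, ‖∫ t in a..x, ∑ k, P i k t * z k t‖ :=
          Finset.sum_congr rfl fun i _ => by rw [← hz_eq i x hx]
      _ ≤ ∑ i, ∫ t in a..x, (∑ k, ‖P i k t‖) * r t := by
          refine Finset.sum_le_sum fun i _ => intervalIntegral.norm_integral_le_of_norm_le hx.1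
            (ae_of_all _ fun t _ => ?_) (hint i)
          calc ‖∑ k, P i k t * z k t‖ ≤ ∑ k, ‖P i k t‖ * ‖z k t‖ :=
                (norm_sum_le _ _).trans_eq (Finset.sum_congr rfl fun k _ => norm_mul _ _)
            _ ≤ ∑ k, ‖P i k t‖ * r t := Finset.sum_le_sum fun k _ =>
                mul_le_mul_of_nonneg_left (hz_le_r k t) (norm_nonneg _)
            _ = (∑ k, ‖P i k t‖) * r t := (Finset.sum_mul ..).symm
      _ = ∫ t in a..x, (∑ i, ∑ k, ‖P i k t‖) * r t := by
          rw [← intervalIntegral.integral_finsetSum fun i _ => hint i]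
          simp only [Finset.sum_mul]
  have hr_nonpos := le_zero_of_le_integral_mul (IntervalIntegrable.fun_sum hP_norm)
    (fun t _ => by positivity) hr hle
  intro i x hx
  exact norm_le_zero_iff.1 ((hz_le_r i x).trans (hr_nonpos x hx))

theorem eq_of_eq_integral_linear (hP : ∀ i k, IntervalIntegrable (P i k) volume a b)
    {q y z : ι → ℝ → 𝕜} (hq : ∀ i, IntervalIntegrable (q i) volume a b)
    (hy : ∀ i, ContinuousOn (y i) (Icc a b)) (hz : ∀ i, ContinuousOn (z i) (Icc a b))
    (hy_eq : ∀ i, ∀ x ∈ Icc a b, y i x = y i a + ∫ t in a..x, (∑ k, P i k t * y k t + q i t))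
    (hz_eq : ∀ i, ∀ x ∈ Icc a b, z i x = z i a + ∫ t in a..x, (∑ k, P i k t * z k t + q i t))
    (ha : ∀ i, y i a = z i a) :
    ∀ i, ∀ x ∈ Icc a b, y i x = z i x := by
  have hint : ∀ w : ι → ℝ → 𝕜, (∀ i, ContinuousOn (w i) (Icc a b)) → ∀ i, ∀ x ∈ Icc a b,
      IntervalIntegrable (fun t => ∑ k, P i k t * w k t + q i t) volume a x := by
    intro w hw i x hx
    have hsub : uIcc a x ⊆ uIcc a b := uIcc_subset_uIcc_left (Icc_subset_uIcc hx)
    refine (IntervalIntegrable.fun_sum fun k => ?_).add ((hq i).mono_set hsub)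
    exact ((hP i k).mono_set hsub).mul_continuousOn ((hw k).mono (uIcc_subset_Icc_of_mem hx))
  have hdiff := eq_zero_of_eq_integral_linear hP (z := fun i x => y i x - z i x)
    (fun i => (hy i).sub (hz i)) fun i x hx => by
      rw [hy_eq i x hx, hz_eq i x hx, ha i, add_sub_add_left_eq_sub,
        ← intervalIntegral.integral_sub (hint y hy i x hx) (hint z hz i x hx)]
      congr 1 with t
      simp only [mul_sub, Finset.sum_sub_distrib]
      ring
  exact fun i x hx => sub_eq_zero.1 (hdiff i x hx)

end LinearSystem

section VariationOfConstants

variable {ι 𝕜 : Type*} [Fintype ι] [RCLike 𝕜] {a b : ℝ}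

theorem variation_of_constants {P : ι → ι → ℝ → 𝕜} {M : ℝ → Matrix ι ι 𝕜}
    {c c' q : ι → ℝ → 𝕜}
    (hM' : ∀ i j, IntervalIntegrable (fun t => ∑ k, P i k t * M t k j) volume a b)
    (hM : ∀ i j, ∀ x ∈ Icc a b, M x i j = M a i j + ∫ t in a..x, ∑ k, P i k t * M t k j)
    (hc' : ∀ j, IntervalIntegrable (c' j) volume a b)
    (hc : ∀ j, ∀ x ∈ Icc a b, c j x = c j a + ∫ t in a..x, c' j t)
    (hq : ∀ i, ∀ t ∈ Icc a b, ∑ j, M t i j * c' j t = q i t) :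
    ∀ i, ∀ x ∈ Icc a b, ∑ j, M x i j * c j x =
      ∑ j, M a i j * c j a + ∫ t in a..x, (∑ k, P i k t * ∑ j, M t k j * c j t + q i t) := by
  intro i x hx
  have hab : a ≤ b := hx.1.trans hx.2
  have hsub : uIcc a x ⊆ uIcc a b := uIcc_subset_uIcc_left (Icc_subset_uIcc hx)
  have hint : ∀ j, IntervalIntegrable
      (fun t => (∑ k, P i k t * M t k j) * c j t + M t i j * c' j t) volume a x := fun j =>
    (((hM' i j).mono_set hsub).mul_continuousOn
        ((continuousOn_of_eq_primitive hab (hc' j) (hc j)).mono (uIcc_subset_Icc_of_mem hx))).add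
      (((hc' j).mono_set hsub).continuousOn_mul
        ((continuousOn_of_eq_primitive hab (hM' i j) (hM i j)).mono (uIcc_subset_Icc_of_mem hx)))
  have hsum : ∫ t in a..x, (∑ k, P i k t * ∑ j, M t k j * c j t + q i t) =
      ∑ j, (M x i j * c j x - M a i j * c j a) := by
    rw [← Finset.sum_congr rfl fun j _ => integral_deriv_mul_eq_sub_of_eq_primitive
        (hM' i j) (hc' j) (hM i j) (hc j) x hx,
      ← intervalIntegral.integral_finsetSum fun j _ => hint j]
    refine intervalIntegral.integral_congr fun t ht => ?_
    simp only [← hq i t (uIcc_subset_Icc_of_mem hx ht), Finset.sum_add_distrib, Finset.mul_sum,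
      Finset.sum_mul, mul_assoc]
    rw [Finset.sum_comm]
  rw [hsum, Finset.sum_sub_distrib]
  ring

end VariationOfConstants

theorem ContinuousOn.matrix_inv {X ι 𝕜 : Type*} [TopologicalSpace X] [Fintype ι] [DecidableEq ι]
    [NormedField 𝕜] [CompleteSpace 𝕜] {M : X → Matrix ι ι 𝕜} {s : Set X}
    (hM : ContinuousOn M s) (hunit : ∀ x ∈ s, IsUnit (M x)) :
    ContinuousOn (fun x => (M x)⁻¹) s := fun x hx =>
  (continuousAt_matrix_inv _ (NormedRing.inverse_continuousAt
    ((Matrix.isUnit_iff_isUnit_det _).1 (hunit x hx)).unit)).comp_continuousWithinAt (hM x hx)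

/-- The inhomogeneity `A_{n-1,n} Y_n e_{n-1}`: `Y_n` enters only the last row, outside `ã`. -/
def forcing (n : ℕ) (A : ℕ → ℕ → ℝ → ℂ) (Y : ℕ → ℝ → ℂ) (i : Fin n) (t : ℝ) : ℂ :=
  if (i : ℕ) = n - 1 then A (n - 1) n t * Y n t else 0

theorem sum_range_eq_sum_Atld_add_forcing {n : ℕ} (A : ℕ → ℕ → ℝ → ℂ) (Y : ℕ → ℝ → ℂ)
    (i : Fin n) (t : ℝ) :
    ∑ j ∈ Finset.range (i + 2), A i j t * Y j t =
      ∑ k : Fin n, Atld n A i k t * Y k t + forcing n A Y i t := by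
  have htrunc : ∑ k : Fin n, Atld n A i k t * Y k t =
      ∑ j ∈ Finset.range (min n (i + 2)), A i j t * Y j t := by
    calc ∑ k : Fin n, Atld n A i k t * Y k t
        = ∑ j ∈ Finset.range n, if j < i + 2 then A i j t * Y j t else 0 := by
          rw [← Fin.sum_univ_eq_sum_range]
          refine Finset.sum_congr rfl fun k _ => ?_
          have := k.2
          simp only [Atld]
          split_ifs <;> first | rfl | omega | simp
      _ = ∑ j ∈ Finset.range (min n (i + 2)), A i j t * Y j t := by
          rw [← Finset.sum_filter]
          congr 1
          ext j
          simp only [Finset.mem_filter, Finset.mem_range]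
          omega
  rw [htrunc, forcing]
  rcases Nat.lt_or_ge ((i : ℕ) + 1) n with hi | hi
  · rw [min_eq_right (by omega), if_neg (by omega), add_zero]
  · rw [min_eq_left (by omega), if_pos (by omega), show (i : ℕ) + 2 = n + 1 by omega,
      Finset.sum_range_succ, show (i : ℕ) = n - 1 by omega]

theorem sum_mul_inv_mul_eq_forcing {n : ℕ} {A : ℕ → ℕ → ℝ → ℂ} {Y : ℕ → ℝ → ℂ}
    {N : Matrix (Fin n) (Fin n) ℂ} (hN : IsUnit N) {l : Fin n} (hl : (l : ℕ) = n - 1)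
    (i : Fin n) (t : ℝ) :
    ∑ j, N i j * (A (n - 1) n t * N⁻¹ j l * Y n t) = forcing n A Y i t := by
  calc ∑ j, N i j * (A (n - 1) n t * N⁻¹ j l * Y n t)
      = (N * N⁻¹) i l * (A (n - 1) n t * Y n t) := by
        rw [Matrix.mul_apply, Finset.sum_mul]
        exact Finset.sum_congr rfl fun j _ => by ring
    _ = forcing n A Y i t := by
        simp [Matrix.mul_nonsing_inv _ ((Matrix.isUnit_iff_isUnit_det _).1 hN),
          Matrix.one_apply, Fin.ext_iff, forcing, hl]

theorem integrableOn_Atld {n : ℕ} {A : ℕ → ℕ → ℝ → ℂ} {s : Set ℝ}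
    (hA : ∀ i j, IntegrableOn (A i j) s) (i k : Fin n) : IntegrableOn (Atld n A i k) s := by
  unfold Atld
  split_ifs
  exacts [hA _ _, integrableOn_zero]

theorem MemW.integrableOn_mul {A : ℕ → ℕ → ℝ → ℂ} {n : ℕ} {Y : ℕ → ℝ → ℂ} (hY : MemW A 1 n Y)
    (hA : AEStronglyMeasurable (A (n - 1) n) (volume.restrict (Icc 0 1))) :
    IntegrableOn (fun t => A (n - 1) n t * Y n t) (Icc 0 1) :=
  hY.2.2.1.mono' (hA.mul hY.2.1.aestronglyMeasurable) (ae_of_all _ fun t => by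
    rw [norm_mul, Real.rpow_one])

theorem MemW.integrableOn_forcing {A : ℕ → ℕ → ℝ → ℂ} {n : ℕ} {Y : ℕ → ℝ → ℂ}
    (hY : MemW A 1 n Y) (hA : AEStronglyMeasurable (A (n - 1) n) (volume.restrict (Icc 0 1)))
    (i : Fin n) : IntegrableOn (forcing n A Y i) (Icc 0 1) := by
  unfold forcing
  split_ifs
  exacts [hY.integrableOn_mul hA, integrableOn_zero]

theorem stmt2 (n : ℕ) (hn : 1 ≤ n) (A : ℕ → ℕ → ℝ → ℂ)
    (hA : ∀ i j, IntegrableOn (A i j) (Set.Icc 0 1))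
    (M : ℝ → Matrix (Fin n) (Fin n) ℂ) (hM : ACsol n A M)
    (hMinv : ∀ x ∈ Set.Icc (0:ℝ) 1, IsUnit (M x))
    (Y : ℕ → ℝ → ℂ) (hY : MemW A 1 n Y) :
    ∀ i : Fin n, ∀ x ∈ Set.Icc (0:ℝ) 1,
      Y i x = ∑ j : Fin n, M x i j *
        (Y j 0 + ∫ t in (0:ℝ)..x,
          A (n-1) n t * (M t)⁻¹ j ⟨n-1, by omega⟩ * Y n t) := by
  have hII : ∀ {f : ℝ → ℂ}, IntegrableOn f (Icc 0 1) → IntervalIntegrable f volume 0 1 :=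
    (intervalIntegrable_iff_integrableOn_Icc_of_le zero_le_one).2
  have hq := hY.integrableOn_mul (hA _ _).1
  have hforcing := hY.integrableOn_forcing (hA _ _).1
  obtain ⟨hYc, -, -, -, hYeq⟩ := hY
  obtain ⟨hM0, hMc, hMint, hMeq⟩ := hM
  set c' : Fin n → ℝ → ℂ := fun j t => A (n - 1) n t * (M t)⁻¹ j ⟨n - 1, by omega⟩ * Y n t
  have hMinvc := (continuousOn_pi.2 fun i => continuousOn_pi.2 (hMc i)).matrix_inv hMinv
  have hc' : ∀ j, IntervalIntegrable (c' j) volume 0 1 := fun j =>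
    hII <| (hq.continuousOn_mul ((continuous_apply _).comp_continuousOn
      ((continuous_apply j).comp_continuousOn hMinvc)) isCompact_Icc).congr_fun
      (fun t _ => by simp only [c', Function.comp]; ring) measurableSet_Icc
  have hc : ∀ j : Fin n, ∀ x ∈ Icc (0 : ℝ) 1, Y j 0 + ∫ t in (0 : ℝ)..x, c' j t =
      (Y j 0 + ∫ t in (0 : ℝ)..0, c' j t) + ∫ t in (0 : ℝ)..x, c' j t := by
    simp
  refine eq_of_eq_integral_linear (fun i k => hII (integrableOn_Atld hA i k))
    (fun i => hII (hforcing i)) (y := fun i => Y i) (fun i => hYc i i.2)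
    (fun i => continuousOn_finsetSum _ fun j _ =>
      (hMc i j).mul (continuousOn_of_eq_primitive zero_le_one (hc' j) (hc j)))
    (fun i x hx => ?_) (variation_of_constants (fun i j => hII (hMint i j)) hMeq hc' hc
      fun i t ht => sum_mul_inv_mul_eq_forcing (hMinv t ht) rfl i t)
    (fun i => by simp [hM0, Matrix.one_apply])
  rw [hYeq i i.2 x hx]
  exact congrArg _ (intervalIntegral.integral_congr fun t _ =>
    sum_range_eq_sum_Atld_add_forcing A Y i t)
end
end

section
/- Suppose that for every i < n the function x ↦ ∫₀ˣ |A_{i,i+1}(t)| dt is strictly increasing on [0,1]. Then: (i) for all f_0,…,f_n ∈ L¹([0,1];ℂ) there exist g ∈ L¹([0,1];ℂ) and μ_0,…,μ_{n−1} ∈ ℂ such that for every Y ∈ C_A^n[0,1], Σ_{i=0}^n ∫₀¹ f_i conj(Y_i) dx = ∫₀¹ g conj(Y_n) dx + Σ_{i=0}^{n−1} μ_i conj(Y_i(0)); (ii) conversely, for every g ∈ L¹([0,1];ℂ) and μ_0,…,μ_{n−1} ∈ ℂ there exist f_0,…,f_n ∈ L¹([0,1];ℂ) such that the same identity holds for every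 Y ∈ C_A^n[0,1]. -/
open MeasureTheory Set
noncomputable section

/-- Membership in the space `C_A^k[0,1]`. -/
def MemC (A : ℕ → ℕ → ℝ → ℂ) (k : ℕ) (Y : ℕ → ℝ → ℂ) : Prop :=
  (∀ i ≤ k, ContinuousOn (Y i) (Set.Icc 0 1)) ∧
  (∀ i < k, IntegrableOn (fun t => ∑ j ∈ Finset.range (i+2), A i j t * Y j t) (Set.Icc 0 1)) ∧
  (∀ i < k, ∀ x ∈ Set.Icc (0:ℝ) 1,
    Y i x = Y i 0 + ∫ t in (0:ℝ)..x, ∑ j ∈ Finset.range (i+2), A i j t * Y j t)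

open scoped BoundedContinuousFunction Interval

/-!
For `Y ∈ C_A^n`, writing `Y_i(x) = Y_i(0) + ∫_0^x (A Y)_i` and exchanging the order of integration
gives, for integrable `h_0, …, h_{n-1}` and `H_k(x) = ∫_x^1 h_k`, the identity
`∑_{i<n} ∫ h_i conj Y_i = ∑_{i<n} (∫ h_i) conj Y_i(0) + ∑_{j≤n} ∫ (A^* H)_j conj Y_j`.
So the data `f_j = h_j - (A^* H)_j` for `j < n` and `f_n = g - (A^* H)_n` represent the functional
`∫ g conj Y_n + ∑ μ_i conj Y_i(0)` with `μ_i = ∫ h_i`. For (ii) take `h_i ≡ μ_i`. For (i) one has to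
solve `h_j = f_j + (A^* H)_j`, a linear Volterra equation for `H` with integrable kernel: the
contraction principle solves it on every interval on which the `L¹` norm of the kernel is `< 1`,
and these local solutions are glued.
-/

theorem MeasureTheory.IntegrableOn.star {α E : Type*} [MeasurableSpace α] {μ : Measure α}
    {s : Set α} [NormedAddCommGroup E] [StarAddMonoid E] [NormedStarGroup E] {f : α → E}
    (hf : IntegrableOn f s μ) : IntegrableOn (fun x => star (f x)) s μ :=
  hf.norm.mono' hf.1.star (ae_of_all _ fun x => (norm_star (f x)).le)

theorem norm_intervalIntegral_le_integral {E : Type*} [NormedAddCommGroup E] [NormedSpace ℝ E]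
    {g : ℝ → E} {ψ : ℝ → ℝ} (hψ : Integrable ψ) (hg : ∀ t, ‖g t‖ ≤ ψ t) (x r : ℝ) :
    ‖∫ t in x..r, g t‖ ≤ ∫ t, ψ t :=
  calc ‖∫ t in x..r, g t‖ ≤ ∫ t in Ι x r, ‖g t‖ :=
        intervalIntegral.norm_integral_le_integral_norm_uIoc
    _ ≤ ∫ t in Ι x r, ψ t :=
        integral_mono_of_nonneg (ae_of_all _ fun _ => norm_nonneg _) hψ.integrableOn
          (ae_of_all _ hg)
    _ ≤ ∫ t, ψ t := setIntegral_le_integral hψ (ae_of_all _ fun t => (norm_nonneg _).trans (hg t))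

theorem continuous_intervalIntegral_left {E : Type*} [NormedAddCommGroup E] [NormedSpace ℝ E]
    {g : ℝ → E} (hg : Integrable g) (r : ℝ) :
    Continuous fun x => ∫ t in x..r, g t := by
  simp only [intervalIntegral.integral_symm r]
  exact (hg.continuous_primitive r).neg

theorem continuousOn_intervalIntegral_left_Icc {E : Type*} [NormedAddCommGroup E]
    [NormedSpace ℝ E] {g : ℝ → E} {a b : ℝ} (hab : a ≤ b) (hg : IntegrableOn g (Icc a b)) :
    ContinuousOn (fun x => ∫ s in x..b, g s) (Icc a b) := by
  have := intervalIntegral.continuousOn_primitive_interval_left (f := g) (a := a) (b := b)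
    (by rwa [uIcc_of_le hab])
  rwa [uIcc_of_le hab] at this

theorem setIntegral_Icc_mul_intervalIntegral {𝕜 : Type*} [RCLike 𝕜] {f g : ℝ → 𝕜} {a b : ℝ}
    (hf : IntegrableOn f (Icc a b)) (hg : IntegrableOn g (Icc a b)) :
    ∫ x in Icc a b, f x * ∫ t in a..x, g t = ∫ t in Icc a b, (∫ x in t..b, f x) * g t := by
  set S : Set (ℝ × ℝ) := {p | p.2 ∈ Ioc a p.1}
  have hS : MeasurableSet S :=
    (measurableSet_lt measurable_const measurable_snd).inter
      (measurableSet_le measurable_snd measurable_fst)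
  set Φ : ℝ → ℝ → 𝕜 := fun x t => S.indicator (fun p => f p.1 * g p.2) (x, t)
  have hΦ : Integrable (Function.uncurry Φ)
      ((volume.restrict (Icc a b)).prod (volume.restrict (Icc a b))) :=
    (hf.mul_prod hg).indicator hS
  calc ∫ x in Icc a b, f x * ∫ t in a..x, g t = ∫ x in Icc a b, ∫ t in Icc a b, Φ x t := by
        refine setIntegral_congr_fun measurableSet_Icc fun x hx => ?_
        have hΦx : Φ x = (Ioc a x).indicator fun t => f x * g t := rfl
        rw [hΦx, setIntegral_indicator measurableSet_Ioc, integral_const_mul,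
          inter_eq_self_of_subset_right (Ioc_subset_Icc_self.trans (Icc_subset_Icc_right hx.2)),
          intervalIntegral.integral_of_le hx.1]
    _ = ∫ t in Icc a b, ∫ x in Icc a b, Φ x t := integral_integral_swap hΦ
    _ = ∫ t in Icc a b, (∫ x in t..b, f x) * g t := by
        simp only [integral_Icc_eq_integral_Ioc]
        refine setIntegral_congr_fun measurableSet_Ioc fun t ht => ?_
        have hΦt : (fun x => Φ x t) = (Ici t).indicator fun x => f x * g t := by
          ext x
          simp only [Φ, S, indicator, mem_ofPred_eq, mem_Ioc, mem_Ici, ht.1, true_and]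
        have hIcc : Ioc a b ∩ Ici t = Icc t b := by
          ext x
          simp only [mem_inter_iff, mem_Ioc, mem_Ici, mem_Icc]
          exact ⟨fun ⟨⟨_, hxb⟩, htx⟩ => ⟨htx, hxb⟩,
            fun ⟨htx, hxb⟩ => ⟨⟨ht.1.trans_le htx, hxb⟩, htx⟩⟩
        rw [hΦt, setIntegral_indicator measurableSet_Ici, integral_mul_const, hIcc,
          integral_Icc_eq_integral_Ioc, intervalIntegral.integral_of_le ht.2]

theorem setIntegral_mul_star_eq_of_eq_add_intervalIntegral {𝕜 : Type*} [RCLike 𝕜]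
    {h y S : ℝ → 𝕜} {a b : ℝ} (hab : a ≤ b) (hh : IntegrableOn h (Icc a b))
    (hS : IntegrableOn S (Icc a b)) (hy : ∀ x ∈ Icc a b, y x = y a + ∫ t in a..x, S t) :
    ∫ x in Icc a b, h x * star (y x)
      = (∫ x in Icc a b, h x) * star (y a) + ∫ x in Icc a b, (∫ s in x..b, h s) * star (S x) := by
  have hP : ContinuousOn (fun x => ∫ t in a..x, star (S t)) (Icc a b) := by
    have := intervalIntegral.continuousOn_primitive_interval (f := fun t => star (S t))
      (a := a) (b := b) (by rw [uIcc_of_le hab]; exact hS.star)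
    rwa [uIcc_of_le hab] at this
  calc ∫ x in Icc a b, h x * star (y x)
      = ∫ x in Icc a b, (h x * star (y a) + h x * ∫ t in a..x, star (S t)) := by
        refine setIntegral_congr_fun measurableSet_Icc fun x hx => ?_
        simp only [hy x hx, star_add, RCLike.star_def, intervalIntegral.intervalIntegral_conj,
          mul_add]
    _ = (∫ x in Icc a b, h x) * star (y a) + ∫ x in Icc a b, h x * ∫ t in a..x, star (S t) := by
        rw [integral_add (hh.mul_const _) (hh.mul_continuousOn hP isCompact_Icc),
          integral_mul_const]
    _ = _ := by rw [setIntegral_Icc_mul_intervalIntegral hh hS.star]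

namespace Volterra

variable {ι : Type*} [Fintype ι] {B : ι → ι → ℝ → ℂ} {φ : ι → ℝ → ℂ} {μ : Measure ℝ}

def kernelNorm (B : ι → ι → ℝ → ℂ) (t : ℝ) : ℝ := ∑ i, ∑ k, ‖B i k t‖

def integrand (B : ι → ι → ℝ → ℂ) (φ : ι → ℝ → ℂ) (F : ℝ → ι → ℂ) (i : ι) (t : ℝ) : ℂ :=
  φ i t + ∑ k, B i k t * F t k

/-- `F` solves the terminal value problem `F' = -(φ + B F)`, `F r = c`, on `[a, r]`. -/
def IsSolution (B : ι → ι → ℝ → ℂ) (φ : ι → ℝ → ℂ) (c : ι → ℂ) (F : ℝ →ᵇ (ι → ℂ))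
    (a r : ℝ) : Prop :=
  ∀ x ∈ Icc a r, ∀ i, F x i = c i + ∫ t in x..r, integrand B φ F i t

lemma kernelNorm_nonneg (B : ι → ι → ℝ → ℂ) (t : ℝ) : 0 ≤ kernelNorm B t := by
  unfold kernelNorm
  positivity

lemma integrable_kernelNorm (hB : ∀ i k, Integrable (B i k) μ) : Integrable (kernelNorm B) μ :=
  integrable_finsetSum _ fun i _ => integrable_finsetSum _ fun k _ => (hB i k).norm

lemma norm_sum_mul_le (F : ℝ →ᵇ (ι → ℂ)) (i : ι) (t : ℝ) :
    ‖∑ k, B i k t * F t k‖ ≤ kernelNorm B t * ‖F‖ :=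
  calc ‖∑ k, B i k t * F t k‖ ≤ ∑ k, ‖B i k t‖ * ‖F‖ :=
        (norm_sum_le _ _).trans <| Finset.sum_le_sum fun k _ => by
          rw [norm_mul]
          gcongr
          exact (norm_le_pi_norm (F t) k).trans (F.norm_coe_le_norm t)
    _ = (∑ k, ‖B i k t‖) * ‖F‖ := (Finset.sum_mul ..).symm
    _ ≤ kernelNorm B t * ‖F‖ := by
        gcongr
        exact Finset.single_le_sum (f := fun i => ∑ k, ‖B i k t‖) (fun _ _ => by positivity)
          (Finset.mem_univ i)

lemma integrable_integrand (hB : ∀ i k, Integrable (B i k) μ) (hφ : ∀ i, Integrable (φ i) μ)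
    (F : ℝ →ᵇ (ι → ℂ)) (i : ι) : Integrable (integrand B φ F i) μ :=
  (hφ i).add <| integrable_finsetSum _ fun k _ =>
    (hB i k).mul_bdd ((continuous_apply k).comp F.continuous).aestronglyMeasurable
      (ae_of_all _ fun t => (norm_le_pi_norm (F t) k).trans (F.norm_coe_le_norm t))

lemma integrand_congr {F G : ℝ → ι → ℂ} {t : ℝ} (h : F t = G t) (i : ι) :
    integrand B φ F i t = integrand B φ G i t := by
  simp only [integrand, h]

lemma integrand_sub_integrand (F G : ℝ →ᵇ (ι → ℂ)) (i : ι) (t : ℝ) :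
    integrand B φ F i t - integrand B φ G i t = ∑ k, B i k t * (F - G) t k := by
  simp only [integrand, BoundedContinuousFunction.coe_sub, Pi.sub_apply, mul_sub,
    Finset.sum_sub_distrib]
  ring

def op (hB : ∀ i k, Integrable (B i k)) (hφ : ∀ i, Integrable (φ i)) (c : ι → ℂ) (r : ℝ)
    (F : ℝ →ᵇ (ι → ℂ)) : ℝ →ᵇ (ι → ℂ) :=
  BoundedContinuousFunction.ofNormedAddCommGroup
    (fun x i => c i + ∫ t in x..r, integrand B φ F i t)
    (continuous_pi fun i => continuous_const.add <|
      continuous_intervalIntegral_left (integrable_integrand hB hφ F i) r)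
    (‖c‖ + ∑ i, ∫ t, ‖integrand B φ F i t‖) fun x => by
      refine (pi_norm_le_iff_of_nonneg (by positivity)).2 fun i => ?_
      refine (norm_add_le _ _).trans (add_le_add (norm_le_pi_norm c i) ?_)
      refine (norm_intervalIntegral_le_integral (integrable_integrand hB hφ F i).norm
        (fun t => le_rfl) x r).trans ?_
      exact Finset.single_le_sum (f := fun i => ∫ t, ‖integrand B φ F i t‖)
        (fun _ _ => integral_nonneg fun _ => norm_nonneg _) (Finset.mem_univ i)

lemma dist_op_le (hB : ∀ i k, Integrable (B i k)) (hφ : ∀ i, Integrable (φ i)) (c : ι → ℂ)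
    (r : ℝ) (F G : ℝ →ᵇ (ι → ℂ)) :
    dist (op hB hφ c r F) (op hB hφ c r G) ≤ (∫ t, kernelNorm B t) * dist F G := by
  have hm : 0 ≤ ∫ t, kernelNorm B t := integral_nonneg (kernelNorm_nonneg B)
  refine (BoundedContinuousFunction.dist_le (by positivity)).2 fun x => ?_
  rw [dist_eq_norm]
  refine (pi_norm_le_iff_of_nonneg (by positivity)).2 fun i => ?_
  have hdiff : (op hB hφ c r F x - op hB hφ c r G x) i
      = ∫ t in x..r, ∑ k, B i k t * (F - G) t k := by
    simp only [Pi.sub_apply, op, BoundedContinuousFunction.coe_ofNormedAddCommGroup,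
      add_sub_add_left_eq_sub]
    rw [← intervalIntegral.integral_sub (integrable_integrand hB hφ F i).intervalIntegrable
      (integrable_integrand hB hφ G i).intervalIntegrable]
    simp only [integrand_sub_integrand]
  rw [hdiff, ← integral_mul_const, dist_eq_norm F G]
  exact norm_intervalIntegral_le_integral ((integrable_kernelNorm hB).mul_const _)
    (fun t => norm_sum_mul_le (F - G) i t) x r

lemma exists_forall_eq_of_integral_kernelNorm_lt_one (hB : ∀ i k, Integrable (B i k))
    (hφ : ∀ i, Integrable (φ i)) (hm : ∫ t, kernelNorm B t < 1) (c : ι → ℂ) (r : ℝ) :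
    ∃ F : ℝ →ᵇ (ι → ℂ), ∀ x i, F x i = c i + ∫ t in x..r, integrand B φ F i t := by
  have hK : ContractingWith (∫ t, kernelNorm B t).toNNReal (op hB hφ c r) := by
    refine ⟨by simpa using hm, LipschitzWith.of_dist_le_mul fun F G => ?_⟩
    rw [Real.coe_toNNReal _ (integral_nonneg (kernelNorm_nonneg B))]
    exact dist_op_le hB hφ c r F G
  exact ⟨hK.fixedPoint, fun x i => (congrFun (DFunLike.congr_fun hK.fixedPoint_isFixedPt x) i).symm⟩

lemma exists_isSolution_of_intervalIntegral_lt_one {a r : ℝ} (har : a ≤ r)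
    (hB : ∀ i k, IntegrableOn (B i k) (Icc a r)) (hφ : ∀ i, IntegrableOn (φ i) (Icc a r))
    (hm : ∫ t in a..r, kernelNorm B t < 1) (c : ι → ℂ) :
    ∃ F, IsSolution B φ c F a r := by
  -- truncated to `[a, r]`, the operator `op` is a contraction on all of `ℝ →ᵇ (ι → ℂ)`
  set B' : ι → ι → ℝ → ℂ := fun i k => (Icc a r).indicator (B i k)
  set φ' : ι → ℝ → ℂ := fun i => (Icc a r).indicator (φ i)
  have hB' : ∀ i k, Integrable (B' i k) := fun i k =>
    (hB i k).integrable_indicator measurableSet_Icc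
  have hφ' : ∀ i, Integrable (φ' i) := fun i => (hφ i).integrable_indicator measurableSet_Icc
  have hm' : ∫ t, kernelNorm B' t < 1 := by
    have : kernelNorm B' = (Icc a r).indicator (kernelNorm B) := by
      ext t
      by_cases ht : t ∈ Icc a r <;> simp [kernelNorm, B', ht]
    rwa [this, integral_indicator measurableSet_Icc, integral_Icc_eq_integral_Ioc,
      ← intervalIntegral.integral_of_le har]
  obtain ⟨F, hF⟩ := exists_forall_eq_of_integral_kernelNorm_lt_one hB' hφ' hm' c r
  refine ⟨F, fun x hx i => (hF x i).trans ?_⟩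
  congr 1
  refine intervalIntegral.integral_congr fun t ht => ?_
  rw [uIcc_of_le hx.2] at ht
  have ht' : t ∈ Icc a r := ⟨hx.1.trans ht.1, ht.2⟩
  simp [integrand, B', φ', ht']

lemma IsSolution.glue {a b r : ℝ} {c : ι → ℂ} {F₁ G : ℝ →ᵇ (ι → ℂ)}
    (hB : ∀ i k, IntegrableOn (B i k) (Icc a r)) (hφ : ∀ i, IntegrableOn (φ i) (Icc a r))
    (hab : a ≤ b) (hbr : b ≤ r) (hF₁ : IsSolution B φ c F₁ b r)
    (hG : IsSolution B φ (F₁ b) G a b) : ∃ F, IsSolution B φ c F a r := by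
  have hGb : G b = F₁ b := funext fun i => by
    simp [hG b ⟨hab, le_rfl⟩ i]
  let F : ℝ →ᵇ (ι → ℂ) := G + (F₁ - G).compContinuous ⟨fun x => max x b, by fun_prop⟩
  have hFG : ∀ t ≤ b, F t = G t := fun t ht => by simp [F, max_eq_right ht, hGb]
  have hFF₁ : ∀ t, b ≤ t → F t = F₁ t := fun t ht => by simp [F, max_eq_left ht]
  have hint : ∀ i {u v : ℝ}, u ∈ Icc a r → v ∈ Icc a r →
      IntervalIntegrable (integrand B φ F i) volume u v := fun i u v hu hv =>
    IntegrableOn.intervalIntegrable <|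
      IntegrableOn.mono_set (integrable_integrand hB hφ F i) (uIcc_subset_Icc hu hv)
  have hright : ∀ x ∈ Icc b r, ∀ i,
      ∫ t in x..r, integrand B φ F₁ i t = ∫ t in x..r, integrand B φ F i t := fun x hx i =>
    intervalIntegral.integral_congr fun t ht => by
      rw [uIcc_of_le hx.2] at ht
      exact integrand_congr (hFF₁ t (hx.1.trans ht.1)).symm i
  refine ⟨F, fun x hx i => ?_⟩
  rcases le_total x b with hxb | hbx
  · have hleft : ∫ t in x..b, integrand B φ G i t = ∫ t in x..b, integrand B φ F i t :=
      intervalIntegral.integral_congr fun t ht => by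
        rw [uIcc_of_le hxb] at ht
        exact integrand_congr (hFG t ht.2).symm i
    have hb : b ∈ Icc a r := ⟨hab, hbr⟩
    rw [hFG x hxb, hG x ⟨hx.1, hxb⟩ i, hF₁ b ⟨le_rfl, hbr⟩ i, hleft, hright b ⟨le_rfl, hbr⟩ i,
      ← intervalIntegral.integral_add_adjacent_intervals (hint i hx hb)
        (hint i hb ⟨hab.trans hbr, le_rfl⟩)]
    ring
  · rw [hFF₁ x hbx, hF₁ x ⟨hbx, hx.2⟩ i, hright x ⟨hbx, hx.2⟩ i]

lemma exists_isSolution_of_intervalIntegral_le (K : ℕ) :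
    ∀ {a r : ℝ}, a ≤ r → (∀ i k, IntegrableOn (B i k) (Icc a r)) →
      (∀ i, IntegrableOn (φ i) (Icc a r)) → ∫ t in a..r, kernelNorm B t ≤ K / 2 →
      ∀ c, ∃ F, IsSolution B φ c F a r := by
  induction K with
  | zero =>
    intro a r har hB hφ hm c
    exact exists_isSolution_of_intervalIntegral_lt_one har hB hφ (by simp at hm; linarith) c
  | succ K ih =>
    intro a r har hB hφ hm c
    by_cases hsmall : ∫ t in a..r, kernelNorm B t < 1
    · exact exists_isSolution_of_intervalIntegral_lt_one har hB hφ hsmall c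
    have hmi : IntegrableOn (kernelNorm B) (Icc a r) := integrable_kernelNorm hB
    obtain ⟨b, ⟨hab, hbr⟩, hb⟩ : ∃ b ∈ Icc a r, ∫ t in b..r, kernelNorm B t = 1 / 2 := by
      exact intermediate_value_Icc' har (continuousOn_intervalIntegral_left_Icc har hmi)
        ⟨by simp, by linarith⟩
    have hsub₁ : Icc a b ⊆ Icc a r := Icc_subset_Icc_right hbr
    have hsub₂ : Icc b r ⊆ Icc a r := Icc_subset_Icc_left hab
    have hsplit := intervalIntegral.integral_add_adjacent_intervals
      (IntegrableOn.intervalIntegrable (by rw [uIcc_of_le hab]; exact hmi.mono_set hsub₁))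
      (IntegrableOn.intervalIntegrable (by rw [uIcc_of_le hbr]; exact hmi.mono_set hsub₂))
    obtain ⟨F₁, hF₁⟩ := exists_isSolution_of_intervalIntegral_lt_one hbr
      (fun i k => (hB i k).mono_set hsub₂) (fun i => (hφ i).mono_set hsub₂) (by rw [hb]; norm_num) c
    obtain ⟨G, hG⟩ := ih hab (fun i k => (hB i k).mono_set hsub₁) (fun i => (hφ i).mono_set hsub₁)
      (by push_cast at hm; linarith) (F₁ b)
    exact hF₁.glue hB hφ hab hbr hG

theorem exists_eq_add_sum_mul_intervalIntegral {a r : ℝ} (har : a ≤ r)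
    (hB : ∀ i k, IntegrableOn (B i k) (Icc a r)) (hφ : ∀ i, IntegrableOn (φ i) (Icc a r)) :
    ∃ h : ι → ℝ → ℂ, (∀ i, IntegrableOn (h i) (Icc a r)) ∧
      ∀ i, ∀ x ∈ Icc a r, h i x = φ i x + ∑ k, B i k x * ∫ t in x..r, h k t := by
  obtain ⟨F, hF⟩ := exists_isSolution_of_intervalIntegral_le ⌈2 * ∫ t in a..r, kernelNorm B t⌉₊
    har hB hφ (by linarith [Nat.le_ceil (2 * ∫ t in a..r, kernelNorm B t)]) 0
  refine ⟨integrand B φ F, integrable_integrand hB hφ F, fun i x hx => ?_⟩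
  show φ i x + ∑ k, B i k x * F x k = _
  congr 1
  refine Finset.sum_congr rfl fun k _ => ?_
  rw [hF x hx k, Pi.zero_apply, zero_add]

end Volterra

/-- The `j`-th component of `A^* H` with `H_k(x) = ∫_x^1 h_k`; a system in `C_A^n` only involves
`A_{kj}` with `k < n` and `j ≤ k + 1`. -/
def adjointSum (A : ℕ → ℕ → ℝ → ℂ) (n : ℕ) (h : ℕ → ℝ → ℂ) (j : ℕ) (x : ℝ) : ℂ :=
  ∑ k ∈ Finset.range n, if j ≤ k + 1 then star (A k j x) * ∫ s in x..1, h k s else 0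

theorem sum_mul_star_sum_eq_sum (n : ℕ) (a : ℕ → ℕ → ℂ) (H y : ℕ → ℂ) :
    ∑ i ∈ Finset.range n, H i * star (∑ j ∈ Finset.range (i + 2), a i j * y j)
      = ∑ j ∈ Finset.range (n + 1),
          (∑ k ∈ Finset.range n, if j ≤ k + 1 then star (a k j) * H k else 0) * star (y j) := by
  simp only [Finset.sum_mul, ite_mul, zero_mul]
  rw [Finset.sum_comm]
  refine Finset.sum_congr rfl fun k hk => ?_
  rw [← Finset.sum_filter]
  have hfilter : (Finset.range (n + 1)).filter (· ≤ k + 1) = Finset.range (k + 2) := by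
    ext j
    simp only [Finset.mem_filter, Finset.mem_range] at hk ⊢
    omega
  rw [hfilter, star_sum, Finset.mul_sum]
  refine Finset.sum_congr rfl fun j _ => ?_
  rw [star_mul']
  ring

section Adjoint

variable {n : ℕ} {A : ℕ → ℕ → ℝ → ℂ} {h Y : ℕ → ℝ → ℂ}

theorem integrableOn_adjointSum (hA : ∀ i j, IntegrableOn (A i j) (Icc 0 1))
    (hh : ∀ k, IntegrableOn (h k) (Icc 0 1)) (j : ℕ) :
    IntegrableOn (adjointSum A n h j) (Icc 0 1) := by
  refine integrable_finsetSum _ fun k _ => ?_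
  by_cases hjk : j ≤ k + 1
  · simp only [hjk, if_true]
    exact (hA k j).star.mul_continuousOn
      (continuousOn_intervalIntegral_left_Icc zero_le_one (hh k)) isCompact_Icc
  · simp only [hjk, if_false]
    exact integrableOn_zero

theorem MemC.integrableOn_mul_star {g : ℝ → ℂ} (hY : MemC A n Y) (hg : IntegrableOn g (Icc 0 1))
    {j : ℕ} (hj : j ≤ n) : IntegrableOn (fun x => g x * star (Y j x)) (Icc 0 1) :=
  hg.mul_continuousOn (hY.1 j hj).star isCompact_Icc

theorem sum_setIntegral_mul_star_eq (hA : ∀ i j, IntegrableOn (A i j) (Icc 0 1))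
    (hh : ∀ k, IntegrableOn (h k) (Icc 0 1)) (hY : MemC A n Y) :
    ∑ i ∈ Finset.range n, ∫ x in Icc (0:ℝ) 1, h i x * star (Y i x)
      = ∑ i ∈ Finset.range n, (∫ x in Icc (0:ℝ) 1, h i x) * star (Y i 0)
        + ∑ j ∈ Finset.range (n + 1), ∫ x in Icc (0:ℝ) 1, adjointSum A n h j x * star (Y j x) := by
  have hrows : ∀ i ∈ Finset.range n, IntegrableOn
      (fun x => (∫ s in x..1, h i s) * star (∑ j ∈ Finset.range (i + 2), A i j x * Y j x))
      (Icc 0 1) := fun i hi =>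
    (hY.2.1 i (Finset.mem_range.1 hi)).star.continuousOn_mul
      (continuousOn_intervalIntegral_left_Icc zero_le_one (hh i)) isCompact_Icc
  have hcols : ∀ j ∈ Finset.range (n + 1),
      IntegrableOn (fun x => adjointSum A n h j x * star (Y j x)) (Icc 0 1) := fun j hj =>
    hY.integrableOn_mul_star (integrableOn_adjointSum hA hh j)
      (Nat.lt_succ_iff.1 (Finset.mem_range.1 hj))
  rw [Finset.sum_congr rfl fun i hi => setIntegral_mul_star_eq_of_eq_add_intervalIntegral
      zero_le_one (hh i) (hY.2.1 i (Finset.mem_range.1 hi)) (hY.2.2 i (Finset.mem_range.1 hi)),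
    Finset.sum_add_distrib, ← integral_finsetSum _ hrows, ← integral_finsetSum _ hcols]
  congr 2
  ext x
  exact sum_mul_star_sum_eq_sum n (fun i j => A i j x) (fun i => ∫ s in x..1, h i s)
    (fun j => Y j x)

theorem sum_setIntegral_sub_adjointSum_mul_star {g : ℝ → ℂ}
    (hA : ∀ i j, IntegrableOn (A i j) (Icc 0 1)) (hh : ∀ k, IntegrableOn (h k) (Icc 0 1))
    (hg : IntegrableOn g (Icc 0 1)) (hY : MemC A n Y) :
    ∑ j ∈ Finset.range (n + 1), ∫ x in Icc (0:ℝ) 1,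
        ((if j < n then h j x else g x) - adjointSum A n h j x) * star (Y j x)
      = (∫ x in Icc (0:ℝ) 1, g x * star (Y n x))
        + ∑ j ∈ Finset.range n, (∫ x in Icc (0:ℝ) 1, h j x) * star (Y j 0) := by
  have hsplit : ∀ j ∈ Finset.range (n + 1), ∫ x in Icc (0:ℝ) 1,
        ((if j < n then h j x else g x) - adjointSum A n h j x) * star (Y j x)
      = (∫ x in Icc (0:ℝ) 1, (if j < n then h j x else g x) * star (Y j x))
        - ∫ x in Icc (0:ℝ) 1, adjointSum A n h j x * star (Y j x) := fun j hj => by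
    have hjn : j ≤ n := Nat.lt_succ_iff.1 (Finset.mem_range.1 hj)
    have hhg : IntegrableOn (fun x => if j < n then h j x else g x) (Icc 0 1) := by
      split_ifs
      exacts [hh j, hg]
    simp only [sub_mul]
    exact integral_sub (hY.integrableOn_mul_star hhg hjn)
      (hY.integrableOn_mul_star (integrableOn_adjointSum hA hh j) hjn)
  have hlast : ∑ j ∈ Finset.range (n + 1),
        ∫ x in Icc (0:ℝ) 1, (if j < n then h j x else g x) * star (Y j x)
      = (∑ j ∈ Finset.range n, ∫ x in Icc (0:ℝ) 1, h j x * star (Y j x))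
        + ∫ x in Icc (0:ℝ) 1, g x * star (Y n x) := by
    simp only [Finset.sum_range_succ, lt_self_iff_false, if_false]
    congr 1
    exact Finset.sum_congr rfl fun j hj => by simp only [Finset.mem_range.1 hj, if_true]
  rw [Finset.sum_congr rfl hsplit, Finset.sum_sub_distrib, hlast,
    sum_setIntegral_mul_star_eq hA hh hY]
  ring

theorem exists_eq_add_adjointSum (hA : ∀ i j, IntegrableOn (A i j) (Icc 0 1)) {f : ℕ → ℝ → ℂ}
    (hf : ∀ j < n, IntegrableOn (f j) (Icc 0 1)) :
    ∃ h : ℕ → ℝ → ℂ, (∀ k, IntegrableOn (h k) (Icc 0 1)) ∧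
      ∀ j < n, ∀ x ∈ Icc (0:ℝ) 1, h j x = f j x + adjointSum A n h j x := by
  have hB : ∀ j k : Fin n, IntegrableOn
      (fun x => if (j : ℕ) ≤ k + 1 then star (A k j x) else 0) (Icc 0 1) := fun j k => by
    split_ifs
    exacts [(hA k j).star, integrableOn_zero]
  obtain ⟨v, hv, hveq⟩ :=
    Volterra.exists_eq_add_sum_mul_intervalIntegral zero_le_one hB fun j => hf j j.2
  refine ⟨fun j => if hj : j < n then v ⟨j, hj⟩ else 0, fun k => ?_, fun j hj x hx => ?_⟩
  · by_cases hk : k < n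
    · simpa only [hk, dif_pos] using hv ⟨k, hk⟩
    · simp only [hk, dif_neg, not_false_eq_true]
      exact integrableOn_zero
  · simp only [hj, dif_pos]
    rw [hveq ⟨j, hj⟩ x hx, adjointSum, ← Fin.sum_univ_eq_sum_range]
    congr 1
    refine Finset.sum_congr rfl fun k _ => ?_
    simp only [k.2, dif_pos, ite_mul, zero_mul]

end Adjoint

theorem stmt5_general (n : ℕ) (A : ℕ → ℕ → ℝ → ℂ)
    (hA : ∀ i j, IntegrableOn (A i j) (Set.Icc 0 1)) :
    (∀ f : ℕ → ℝ → ℂ, (∀ i ≤ n, IntegrableOn (f i) (Set.Icc 0 1)) →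
      ∃ g : ℝ → ℂ, ∃ μ : ℕ → ℂ, IntegrableOn g (Set.Icc 0 1) ∧
        ∀ Y : ℕ → ℝ → ℂ, MemC A n Y →
          ∑ i ∈ Finset.range (n+1), ∫ x in Set.Icc (0:ℝ) 1, f i x * star (Y i x)
            = (∫ x in Set.Icc (0:ℝ) 1, g x * star (Y n x))
              + ∑ i ∈ Finset.range n, μ i * star (Y i 0)) ∧
    (∀ g : ℝ → ℂ, IntegrableOn g (Set.Icc 0 1) → ∀ μ : ℕ → ℂ,
      ∃ f : ℕ → ℝ → ℂ, (∀ i ≤ n, IntegrableOn (f i) (Set.Icc 0 1)) ∧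
        ∀ Y : ℕ → ℝ → ℂ, MemC A n Y →
          ∑ i ∈ Finset.range (n+1), ∫ x in Set.Icc (0:ℝ) 1, f i x * star (Y i x)
            = (∫ x in Set.Icc (0:ℝ) 1, g x * star (Y n x))
              + ∑ i ∈ Finset.range n, μ i * star (Y i 0)) := by
  refine ⟨fun f hf => ?_, fun g hg μ => ?_⟩
  · obtain ⟨h, hh, hfix⟩ := exists_eq_add_adjointSum hA fun j hj => hf j hj.le
    have hg : IntegrableOn (fun x => f n x + adjointSum A n h n x) (Icc 0 1) :=
      (hf n le_rfl).add (integrableOn_adjointSum hA hh n)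
    refine ⟨_, fun j => ∫ x in Icc 0 1, h j x, hg, fun Y hY => ?_⟩
    rw [← sum_setIntegral_sub_adjointSum_mul_star hA hh hg hY]
    refine Finset.sum_congr rfl fun j hj => setIntegral_congr_fun measurableSet_Icc fun x hx => ?_
    rcases (Nat.lt_succ_iff.1 (Finset.mem_range.1 hj)).lt_or_eq with hjn | rfl
    · simp [hjn, hfix j hjn x hx]
    · simp
  · have hμ : ∀ k, IntegrableOn (fun _ : ℝ => μ k) (Icc 0 1) := fun k =>
      integrableOn_const measure_Icc_lt_top.ne
    refine ⟨fun j x => (if j < n then μ j else g x) - adjointSum A n (fun k _ => μ k) j x,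
      fun j _ => ?_, fun Y hY => ?_⟩
    · refine IntegrableOn.sub ?_ (integrableOn_adjointSum hA hμ j)
      split_ifs
      exacts [hμ j, hg]
    · refine (sum_setIntegral_sub_adjointSum_mul_star hA hμ hg hY).trans ?_
      simp [Real.volume_real_Icc]

theorem stmt5 (n : ℕ) (hn : 1 ≤ n) (A : ℕ → ℕ → ℝ → ℂ)
    (hA : ∀ i j, IntegrableOn (A i j) (Set.Icc 0 1))
    (hmono : ∀ i < n, StrictMonoOn (fun x => ∫ t in (0:ℝ)..x, ‖A i (i+1) t‖) (Set.Icc 0 1)) :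
    (∀ f : ℕ → ℝ → ℂ, (∀ i ≤ n, IntegrableOn (f i) (Set.Icc 0 1)) →
      ∃ g : ℝ → ℂ, ∃ μ : ℕ → ℂ, IntegrableOn g (Set.Icc 0 1) ∧
        ∀ Y : ℕ → ℝ → ℂ, MemC A n Y →
          ∑ i ∈ Finset.range (n+1), ∫ x in Set.Icc (0:ℝ) 1, f i x * star (Y i x)
            = (∫ x in Set.Icc (0:ℝ) 1, g x * star (Y n x))
              + ∑ i ∈ Finset.range n, μ i * star (Y i 0)) ∧
    (∀ g : ℝ → ℂ, IntegrableOn g (Set.Icc 0 1) → ∀ μ : ℕ → ℂ,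
      ∃ f : ℕ → ℝ → ℂ, (∀ i ≤ n, IntegrableOn (f i) (Set.Icc 0 1)) ∧
        ∀ Y : ℕ → ℝ → ℂ, MemC A n Y →
          ∑ i ∈ Finset.range (n+1), ∫ x in Set.Icc (0:ℝ) 1, f i x * star (Y i x)
            = (∫ x in Set.Icc (0:ℝ) 1, g x * star (Y n x))
              + ∑ i ∈ Finset.range n, μ i * star (Y i 0)) :=
  stmt5_general n A hA
end
end

section
/- Suppose that for some λ ∈ ℂ the operator T − λ·(J∘I) : X → W* is bijective with bounded inverse, and set R := I ∘ (T − λ·(J∘I))⁻¹ ∘ J : H → H. Then the inverse of the shifted relation, namely {(z − λy, y) : (y,z) ∈ graph of T•}, is exactly the graph of the bounded operator R; consequently, the graph of T• is a closed subspace of H × H. -/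
noncomputable section

theorem stmt9 {H X W : Type*}
    [NormedAddCommGroup H] [InnerProductSpace ℂ H] [CompleteSpace H]
    [NormedAddCommGroup X] [NormedSpace ℂ X] [CompleteSpace X]
    [NormedAddCommGroup W] [NormedSpace ℂ W] [CompleteSpace W]
    (T : X →L[ℂ] (W →L[ℂ] ℂ)) (I : X →L[ℂ] H) (J : H →L[ℂ] (W →L[ℂ] ℂ))
    (lam : ℂ)
    -- `T - λ·(J∘I)` is bijective with bounded inverse `S`:
    (S : (W →L[ℂ] ℂ) →L[ℂ] X)
    (hS1 : ∀ Y : X, S ((T - lam • J.comp I) Y) = Y)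
    (hS2 : ∀ F : W →L[ℂ] ℂ, (T - lam • J.comp I) (S F) = F) :
    -- the inverse of the shifted relation is the graph of `R = I ∘ S ∘ J`:
    {q : H × H | ∃ y z : H, (∃ Y : X, I Y = y ∧ T Y = J z) ∧ q = (z - lam • y, y)}
      = {q : H × H | q.2 = I (S (J q.1))} ∧
    -- consequently, the graph of `T•` is closed:
    IsClosed {q : H × H | ∃ Y : X, I Y = q.1 ∧ T Y = J q.2} := by
  have key : ∀ y z : H, (∃ Y : X, I Y = y ∧ T Y = J z) ↔ y = I (S (J (z - lam • y))) := by
    intro y z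
    constructor
    · rintro ⟨Y, hy, hz⟩
      have : J (z - lam • y) = (T - lam • J.comp I) Y := by
        simp [map_sub, hz, ← hy, sub_eq_sub_iff_sub_eq_sub]
      rw [this, hS1, hy]
    · intro h
      refine ⟨S (J (z - lam • y)), h.symm, ?_⟩
      have h2 := hS2 (J (z - lam • y))
      rw [ContinuousLinearMap.sub_apply, ContinuousLinearMap.smul_apply,
        ContinuousLinearMap.comp_apply, sub_eq_iff_eq_add] at h2
      rw [h2, ← h, map_sub, map_smul]
      abel
  constructor
  · ext q
    simp only [Set.mem_setOf_eq]
    constructor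
    · rintro ⟨y, z, hyz, rfl⟩
      exact (key y z).mp hyz
    · intro h
      refine ⟨q.2, q.1 + lam • q.2, ?_, by simp⟩
      rw [key]
      simp only [add_sub_cancel_right]
      exact h
  · have : {q : H × H | ∃ Y : X, I Y = q.1 ∧ T Y = J q.2}
        = {q : H × H | q.1 = I (S (J (q.2 - lam • q.1)))} := by
      ext q; exact key q.1 q.2
    rw [this]
    apply isClosed_eq
    · exact continuous_fst
    · exact (I.comp (S.comp J)).continuous.comp
        ((continuous_snd.sub (continuous_const.smul continuous_fst)))
end
end

section
/- Suppose that J is injective, that K : X → W is a bounded conjugate-linear operator satisfying (J z)(K Y) = ⟨I Y, z⟩ for all z ∈ H and Y ∈ X, and that (T Y)(K Y) = 0 implies Y = 0 for Y ∈ X. Then: (i) the relation T• is single-valued, i.e. if Y ∈ X satisfies I Y = 0 and T Y = J z for some z ∈ H, then z = 0; (ii) if moreover T is a Fredholm operator of index 0 (finite-dimensional kernel, closed range whose codimension is finite and equals the dimension of the kernel), then T is bijective with bounded inverse, the set { I(T⁻¹(J z)) : z ∈ H } is dense in H, and in particular the domain { y ∈ H : (y,z) belongs to the graph of T• for some z }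 is dense in H. -/
noncomputable section

/-- `T` is a Fredholm operator of index `0`: finite-dimensional kernel, closed range
whose (finite) codimension equals the dimension of the kernel. -/
def FredholmIndexZero {X D : Type*}
    [NormedAddCommGroup X] [NormedSpace ℂ X]
    [NormedAddCommGroup D] [NormedSpace ℂ D] (T : X →L[ℂ] D) : Prop :=
  FiniteDimensional ℂ (LinearMap.ker (T : X →ₗ[ℂ] D)) ∧
  IsClosed (LinearMap.range (T : X →ₗ[ℂ] D) : Set D) ∧
  FiniteDimensional ℂ (D ⧸ LinearMap.range (T : X →ₗ[ℂ] D)) ∧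
  Module.finrank ℂ (D ⧸ LinearMap.range (T : X →ₗ[ℂ] D)) = Module.finrank ℂ (LinearMap.ker (T : X →ₗ[ℂ] D))

/-!
The sesquilinear pairing `Y ↦ (T Y)(K Y)` is definite, so `T` is injective; for index `0` it is
then surjective, hence an isomorphism by the open mapping theorem. For `M = I ∘ T⁻¹ ∘ J` the
identity `(J z)(K Y) = ⟪I Y, z⟫` gives `⟪M u, u⟫ = (T Y)(K Y)` with `Y = T⁻¹ (J u)`, so
`⟪M u, u⟫ = 0` forces `u = 0`; in particular `range M` has trivial orthogonal complement and is
dense. The same computation with `T Y = J z`, `I Y = 0` gives single-valuedness.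
-/

theorem FredholmIndexZero.surjective_of_injective {X D : Type*}
    [NormedAddCommGroup X] [NormedSpace ℂ X] [NormedAddCommGroup D] [NormedSpace ℂ D]
    {T : X →L[ℂ] D} (hT : FredholmIndexZero T) (hinj : Function.Injective T) :
    Function.Surjective T := by
  obtain ⟨-, -, hfin, hdim⟩ := hT
  have hcodim : Module.finrank ℂ (D ⧸ LinearMap.range (T : X →ₗ[ℂ] D)) = 0 := by
    rw [hdim, LinearMap.ker_eq_bot.2 hinj, finrank_bot]
  have : Subsingleton (D ⧸ LinearMap.range (T : X →ₗ[ℂ] D)) :=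
    Module.finrank_zero_iff.mp hcodim
  exact LinearMap.range_eq_top.mp (Submodule.Quotient.subsingleton_iff.mp this)

theorem denseRange_of_inner_apply_self_eq_zero {𝕜 H : Type*} [RCLike 𝕜]
    [NormedAddCommGroup H] [InnerProductSpace 𝕜 H] [CompleteSpace H] (M : H →L[𝕜] H)
    (hM : ∀ u, inner 𝕜 (M u) u = 0 → u = 0) : DenseRange M := by
  have horth : (LinearMap.range (M : H →ₗ[𝕜] H))ᗮ = ⊥ :=
    (Submodule.eq_bot_iff _).2 fun u hu => hM u (hu (M u) ⟨u, rfl⟩)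
  change Dense (LinearMap.range (M : H →ₗ[𝕜] H) : Set H)
  rwa [Submodule.dense_iff_topologicalClosure_eq_top, Submodule.topologicalClosure_eq_top_iff]

section Pairing

variable {H X W : Type*} [NormedAddCommGroup H] [InnerProductSpace ℂ H]
  [NormedAddCommGroup X] [NormedSpace ℂ X] [NormedAddCommGroup W] [NormedSpace ℂ W]
  {T : X →L[ℂ] (W →L[ℂ] ℂ)} {I : X →L[ℂ] H} {J : H →L[ℂ] (W →L[ℂ] ℂ)}
  {K : X → W}

theorem injective_of_apply_self_eq_zero (hT0 : ∀ Y, T Y (K Y) = 0 → Y = 0) :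
    Function.Injective T :=
  (injective_iff_map_eq_zero T).2 fun Y hY => hT0 Y (by rw [hY, zero_apply])

theorem eq_zero_of_apply_eq_of_inner_eq_zero (hJinj : Function.Injective J)
    (hK : ∀ z Y, J z (K Y) = inner ℂ (I Y) z) (hT0 : ∀ Y, T Y (K Y) = 0 → Y = 0)
    {Y : X} {z : H} (hTY : T Y = J z) (hIYz : inner ℂ (I Y) z = 0) : z = 0 := by
  have hY : Y = 0 := hT0 Y (by rw [hTY, hK, hIYz])
  exact hJinj (by rw [← hTY, hY, map_zero, map_zero])

end Pairing

theorem stmt11_general {H X W : Type*}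
    [NormedAddCommGroup H] [InnerProductSpace ℂ H] [CompleteSpace H]
    [NormedAddCommGroup X] [NormedSpace ℂ X] [CompleteSpace X]
    [NormedAddCommGroup W] [NormedSpace ℂ W]
    (T : X →L[ℂ] (W →L[ℂ] ℂ)) (I : X →L[ℂ] H) (J : H →L[ℂ] (W →L[ℂ] ℂ))
    (hJinj : Function.Injective J)
    (K : X →SL[starRingEnd ℂ] W)
    (hK : ∀ (z : H) (Y : X), (J z) (K Y) = (inner ℂ (I Y) z : ℂ))
    (hT0 : ∀ Y : X, (T Y) (K Y) = 0 → Y = 0) :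
    -- (i) the relation `T•` is single-valued:
    (∀ (Y : X) (z : H), I Y = 0 → T Y = J z → z = 0) ∧
    -- (ii) if moreover `T` is Fredholm of index 0:
    (FredholmIndexZero T →
      Function.Bijective T ∧
      ∃ Tinv : (W →L[ℂ] ℂ) →L[ℂ] X,
        (∀ F : W →L[ℂ] ℂ, T (Tinv F) = F) ∧ (∀ Y : X, Tinv (T Y) = Y) ∧
        Dense {h : H | ∃ z : H, h = I (Tinv (J z))} ∧
        Dense {y : H | ∃ (z : H) (Y : X), I Y = y ∧ T Y = J z}) := by
  refine ⟨fun Y z hIY hTY => eq_zero_of_apply_eq_of_inner_eq_zero hJinj hK hT0 hTY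
    (by rw [hIY, inner_zero_left]), fun hT => ?_⟩
  have hinj := injective_of_apply_self_eq_zero hT0
  have hsurj := hT.surjective_of_injective hinj
  let e := ContinuousLinearEquiv.ofBijective T (LinearMap.ker_eq_bot.2 hinj)
    (LinearMap.range_eq_top.2 hsurj)
  have hdense : DenseRange (I ∘L (e.symm : (W →L[ℂ] ℂ) →L[ℂ] X) ∘L J) :=
    denseRange_of_inner_apply_self_eq_zero _ fun u hu =>
      eq_zero_of_apply_eq_of_inner_eq_zero hJinj hK hT0 (e.apply_symm_apply (J u)) hu
  refine ⟨⟨hinj, hsurj⟩, e.symm, e.apply_symm_apply, e.symm_apply_apply, ?_, ?_⟩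
  · refine Dense.mono ?_ hdense
    rintro _ ⟨z, rfl⟩
    exact ⟨z, rfl⟩
  · refine Dense.mono ?_ hdense
    rintro _ ⟨z, rfl⟩
    exact ⟨z, e.symm (J z), rfl, e.apply_symm_apply (J z)⟩

theorem stmt11 {H X W : Type*}
    [NormedAddCommGroup H] [InnerProductSpace ℂ H] [CompleteSpace H]
    [NormedAddCommGroup X] [NormedSpace ℂ X] [CompleteSpace X]
    [NormedAddCommGroup W] [NormedSpace ℂ W] [CompleteSpace W]
    (T : X →L[ℂ] (W →L[ℂ] ℂ)) (I : X →L[ℂ] H) (J : H →L[ℂ] (W →L[ℂ] ℂ))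
    (hJinj : Function.Injective J)
    (K : X →SL[starRingEnd ℂ] W)
    (hK : ∀ (z : H) (Y : X), (J z) (K Y) = (inner ℂ (I Y) z : ℂ))
    (hT0 : ∀ Y : X, (T Y) (K Y) = 0 → Y = 0) :
    -- (i) the relation `T•` is single-valued:
    (∀ (Y : X) (z : H), I Y = 0 → T Y = J z → z = 0) ∧
    -- (ii) if moreover `T` is Fredholm of index 0:
    (FredholmIndexZero T →
      Function.Bijective T ∧
      ∃ Tinv : (W →L[ℂ] ℂ) →L[ℂ] X,
        (∀ F : W →L[ℂ] ℂ, T (Tinv F) = F) ∧ (∀ Y : X, Tinv (T Y) = Y) ∧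
        Dense {h : H | ∃ z : H, h = I (Tinv (J z))} ∧
        Dense {y : H | ∃ (z : H) (Y : X), I Y = y ∧ T Y = J z}) :=
  stmt11_general T I J hJinj K hK hT0
end
end

section
/- Suppose that I is injective, that K : X → W is a bounded conjugate-linear operator satisfying (J z)(K Y) = ⟨I Y, z⟩ for all z ∈ H and Y ∈ X, and that the sesquilinear form (Y,Z) ↦ (T Y)(K Z) on X is Hermitian, i.e. (T Y)(K Z) = conj((T Z)(K Y)) for all Y, Z ∈ X. Let λ ∈ ℂ with Im λ ≠ 0. If the operator T − λ·(J∘I) : X → W* is Fredholm of index 0 (finite-dimensional kernel, closed range whose codimension is finite and equals the dimension of the kernel), then T − λ·(J∘I) is bijective with bounded inverse. -/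
/-!
If `(T - λ J I) Y = 0`, pairing with `K Y` gives `(T Y)(K Y) = λ ‖I Y‖²`. The left side is real
because the form `(Y, Z) ↦ (T Y)(K Z)` is Hermitian, so `Im λ ≠ 0` forces `I Y = 0`, hence
`Y = 0`. A Fredholm operator of index `0` with trivial kernel is onto, and the open mapping
theorem makes its inverse bounded.
-/

noncomputable section

theorem FredholmIndexZero.range_eq_top {X D : Type*}
    [NormedAddCommGroup X] [NormedSpace ℂ X] [NormedAddCommGroup D] [NormedSpace ℂ D]
    {A : X →L[ℂ] D} (hA : FredholmIndexZero A) (hker : LinearMap.ker (A : X →ₗ[ℂ] D) = ⊥) :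
    LinearMap.range (A : X →ₗ[ℂ] D) = ⊤ := by
  obtain ⟨-, -, hfin, hind⟩ := hA
  rw [← Submodule.Quotient.subsingleton_iff, ← Module.finrank_zero_iff (R := ℂ), hind, hker, finrank_bot]

section HermitianPencil

variable {H X W : Type*} [NormedAddCommGroup H] [InnerProductSpace ℂ H]
  [NormedAddCommGroup X] [NormedSpace ℂ X] [NormedAddCommGroup W] [NormedSpace ℂ W]
  {T : X →L[ℂ] (W →L[ℂ] ℂ)} {I : X →L[ℂ] H} {J : H →L[ℂ] (W →L[ℂ] ℂ)}
  {K : X →SL[starRingEnd ℂ] W} {lam : ℂ} {Y : X}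

theorem apply_self_eq_mul_norm_sq (hK : ∀ (z : H) (Y : X), (J z) (K Y) = (inner ℂ (I Y) z : ℂ))
    (hY : T Y = lam • J (I Y)) : (T Y) (K Y) = lam * (‖I Y‖ ^ 2 : ℝ) := by
  rw [hY, smul_apply, hK, inner_self_eq_norm_sq_to_K, smul_eq_mul]
  push_cast
  rfl

theorem im_mul_norm_sq_eq_zero (hK : ∀ (z : H) (Y : X), (J z) (K Y) = (inner ℂ (I Y) z : ℂ))
    (hself : star ((T Y) (K Y)) = (T Y) (K Y)) (hY : T Y = lam • J (I Y)) :
    lam.im * ‖I Y‖ ^ 2 = 0 := by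
  have him : ((T Y) (K Y)).im = 0 := Complex.conj_eq_iff_im.mp hself
  rwa [apply_self_eq_mul_norm_sq hK hY, Complex.im_mul_ofReal] at him

theorem ker_sub_smul_comp_eq_bot (hIinj : Function.Injective I)
    (hK : ∀ (z : H) (Y : X), (J z) (K Y) = (inner ℂ (I Y) z : ℂ))
    (hHerm : ∀ Y Z : X, (T Y) (K Z) = star ((T Z) (K Y))) (hlam : lam.im ≠ 0) :
    LinearMap.ker ((T - lam • J.comp I : X →L[ℂ] (W →L[ℂ] ℂ)) : X →ₗ[ℂ] (W →L[ℂ] ℂ)) = ⊥ := by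
  refine LinearMap.ker_eq_bot'.mpr fun Y hY => ?_
  have hTY : T Y = lam • J (I Y) := sub_eq_zero.mp hY
  have hnorm : ‖I Y‖ ^ 2 = 0 :=
    (mul_eq_zero.mp (im_mul_norm_sq_eq_zero hK (hHerm Y Y).symm hTY)).resolve_left hlam
  exact hIinj <| by rwa [map_zero, ← norm_eq_zero, ← sq_eq_zero_iff]

end HermitianPencil

theorem stmt13_general {H X W : Type*}
    [NormedAddCommGroup H] [InnerProductSpace ℂ H]
    [NormedAddCommGroup X] [NormedSpace ℂ X] [CompleteSpace X]
    [NormedAddCommGroup W] [NormedSpace ℂ W] [CompleteSpace W]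
    (T : X →L[ℂ] (W →L[ℂ] ℂ)) (I : X →L[ℂ] H) (J : H →L[ℂ] (W →L[ℂ] ℂ))
    (hIinj : Function.Injective I)
    (K : X →SL[starRingEnd ℂ] W)
    (hK : ∀ (z : H) (Y : X), (J z) (K Y) = (inner ℂ (I Y) z : ℂ))
    (hHerm : ∀ Y Z : X, (T Y) (K Z) = star ((T Z) (K Y)))
    (lam : ℂ) (hlam : lam.im ≠ 0)
    (hFred : FredholmIndexZero (T - lam • J.comp I)) :
    Function.Bijective (T - lam • J.comp I) ∧
    ∃ S : (W →L[ℂ] ℂ) →L[ℂ] X,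
      (∀ Y : X, S ((T - lam • J.comp I) Y) = Y) ∧
      (∀ F : W →L[ℂ] ℂ, (T - lam • J.comp I) (S F) = F) := by
  have hker := ker_sub_smul_comp_eq_bot hIinj hK hHerm hlam
  have hrange := hFred.range_eq_top hker
  let e := ContinuousLinearEquiv.ofBijective _ hker hrange
  exact ⟨e.bijective, e.symm.toContinuousLinearMap, e.symm_apply_apply, e.apply_symm_apply⟩

theorem stmt13 {H X W : Type*}
    [NormedAddCommGroup H] [InnerProductSpace ℂ H] [CompleteSpace H]
    [NormedAddCommGroup X] [NormedSpace ℂ X] [CompleteSpace X]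
    [NormedAddCommGroup W] [NormedSpace ℂ W] [CompleteSpace W]
    (T : X →L[ℂ] (W →L[ℂ] ℂ)) (I : X →L[ℂ] H) (J : H →L[ℂ] (W →L[ℂ] ℂ))
    (hIinj : Function.Injective I)
    (K : X →SL[starRingEnd ℂ] W)
    (hK : ∀ (z : H) (Y : X), (J z) (K Y) = (inner ℂ (I Y) z : ℂ))
    (hHerm : ∀ Y Z : X, (T Y) (K Z) = star ((T Z) (K Y)))
    (lam : ℂ) (hlam : lam.im ≠ 0)
    (hFred : FredholmIndexZero (T - lam • J.comp I)) :
    Function.Bijective (T - lam • J.comp I) ∧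
    ∃ S : (W →L[ℂ] ℂ) →L[ℂ] X,
      (∀ Y : X, S ((T - lam • J.comp I) Y) = Y) ∧
      (∀ F : W →L[ℂ] ℂ, (T - lam • J.comp I) (S F) = F) :=
  stmt13_general T I J hIinj K hK hHerm lam hlam hFred
end
end

section
/- Let y : [0,1] → ℂ be such that y and y′ are absolutely continuous, y″ ∈ L¹[0,1], y(0) = y(1) and y′(0) = y′(1). Then the following are equivalent: (a) for every continuously differentiable z : [0,1] → ℂ with z(0) = z(1), one has ∫₀¹ [ (i y″ + p y′ − q y) conj(z′) − q y′ conj(z) ] dx = ∫₀¹ f conj(z) dx; (b) there exists an absolutely continuous function u : [0,1] → ℂ with u(0) = u(1) such that, for almost every x ∈ [0,1]: y″ = −i q y + i p y′ − i u and u′ = −q y′ − f. -/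
/-!
Put `U = i y'' + p y' - q y` and `G = -q y' - f`. Condition (a) says that `G` is the weak
derivative of `U` against test functions with `z 0 = z 1`, and (b) says that `U` agrees a.e. with
an absolutely continuous `u` with `u 0 = u 1` and `u' = G`. Integration by parts, proved via
Fubini on the triangle `t ≤ x`, gives (b) ⇒ (a). Conversely, the test function `z = 1` gives
`∫ G = 0`, so the primitive `P` of `G` vanishes at both ends; integrating by parts against the
primitives of continuous mean-zero functions shows that `U - P` is orthogonal to all of them, so
`U - P` is a.e. constant by the du Bois-Reymond lemma, and `u = c + P` works.
-/

open MeasureTheory Set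
noncomputable section

/-- `g` is absolutely continuous on `[0,1]` with a.e. derivative `g'`, via the
integral representation. -/
def ACWithDeriv (g g' : ℝ → ℂ) : Prop :=
  IntegrableOn g' (Set.Icc 0 1) ∧
  ∀ x ∈ Set.Icc (0:ℝ) 1, g x = g 0 + ∫ t in (0:ℝ)..x, g' t

section DuBoisReymond

variable {E 𝕜 : Type*} [NormedAddCommGroup E] [NormedSpace ℝ E] [FiniteDimensional ℝ E]
  [MeasurableSpace E] [BorelSpace E] [RCLike 𝕜] {μ : Measure E} [IsFiniteMeasure μ]

theorem ae_eq_average_of_integral_mul_eq_zero {W : E → 𝕜} (hW : Integrable W μ)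
    (h : ∀ φ : E → 𝕜, Continuous φ → ∫ x, φ x ∂μ = 0 → ∫ x, W x * φ x ∂μ = 0) :
    ∀ᵐ x ∂μ, W x = ⨍ x, W x ∂μ := by
  set c := ⨍ x, W x ∂μ
  have hWc : Integrable (fun x => W x - c) μ := hW.sub (integrable_const c)
  have key : ∀ᵐ x ∂μ, W x - c = 0 := by
    refine ae_eq_zero_of_integral_contDiff_smul_eq_zero hWc.locallyIntegrable fun ψ hψ hψc => ?_
    set Ψ : E → 𝕜 := fun x => (ψ x : 𝕜)
    set d := ⨍ x, Ψ x ∂μ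
    have hΨd : Continuous fun x => Ψ x - d :=
      (RCLike.continuous_ofReal.comp hψ.continuous).sub continuous_const
    obtain ⟨C, hC⟩ := hψ.continuous.bounded_above_of_compact_support hψc
    have hΨd_le : ∀ x, ‖Ψ x - d‖ ≤ C + ‖d‖ := fun x =>
      (norm_sub_le _ _).trans (by simpa [Ψ] using hC x)
    have hWΨd : Integrable (fun x => (W x - c) * (Ψ x - d)) μ :=
      hWc.mul_bdd hΨd.aestronglyMeasurable (.of_forall hΨd_le)
    have hWd : ∫ x, (W x - c) * (Ψ x - d) ∂μ = 0 := by
      calc ∫ x, (W x - c) * (Ψ x - d) ∂μ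
          = ∫ x, W x * (Ψ x - d) ∂μ - c * ∫ x, Ψ x - d ∂μ := by
            simp only [sub_mul]
            rw [integral_sub (hW.mul_bdd hΨd.aestronglyMeasurable (.of_forall hΨd_le))
              ((Integrable.of_bound hΨd.aestronglyMeasurable _ (.of_forall hΨd_le)).const_mul c),
              integral_const_mul]
        _ = 0 := by
            rw [h _ hΨd (integral_sub_average μ Ψ), integral_sub_average μ Ψ, mul_zero, sub_zero]
    calc ∫ x, ψ x • (W x - c) ∂μ = ∫ x, (W x - c) * (Ψ x - d) + d * (W x - c) ∂μ := by
          congr 1; ext x; rw [RCLike.real_smul_eq_coe_mul]; ring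
      _ = 0 := by
          rw [integral_add hWΨd (hWc.const_mul d), integral_const_mul, integral_sub_average μ W,
            hWd, mul_zero, add_zero]
  filter_upwards [key] with x hx using sub_eq_zero.mp hx

end DuBoisReymond

theorem intervalIntegral_primitive_mul {𝕜 : Type*} [RCLike 𝕜] {g h : ℝ → 𝕜} {a b : ℝ} (hab : a ≤ b)
    (hg : IntegrableOn g (Ioc a b)) (hh : IntegrableOn h (Ioc a b)) :
    ∫ x in a..b, (∫ t in a..x, g t) * h x = ∫ t in a..b, g t * ∫ x in t..b, h x := by
  set μ := volume.restrict (Ioc a b)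
  set F : ℝ → ℝ → 𝕜 := fun x t => if t ≤ x then g t * h x else 0
  have hF : Integrable (Function.uncurry F) (μ.prod μ) := by
    refine ((Integrable.mul_prod (μ := μ) (ν := μ) hh hg).indicator
      (measurableSet_le measurable_snd measurable_fst)).congr (.of_forall ?_)
    rintro ⟨x, t⟩
    by_cases htx : t ≤ x <;> simp [F, indicator, htx, mul_comm]
  have inner_left : ∀ x ∈ Ioc a b, (∫ t in a..x, g t) * h x = ∫ t, F x t ∂μ := by
    intro x hx
    have hset : Ioc a b ∩ Iic x = Ioc a x := by rw [Ioc_inter_Iic, inf_eq_right.2 hx.2]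
    rw [intervalIntegral.integral_of_le hx.1.le, ← integral_mul_const, ← hset,
      ← setIntegral_indicator measurableSet_Iic]
    simp only [F, indicator, mem_Iic]; rfl
  have inner_right : ∀ t ∈ Ioc a b, g t * (∫ x in t..b, h x) = ∫ x, F x t ∂μ := by
    intro t ht
    have hset : Ioc a b ∩ Ici t = Icc t b := by
      ext x; simp only [mem_inter_iff, mem_Ioc, mem_Ici, mem_Icc]
      constructor
      · rintro ⟨⟨-, hxb⟩, htx⟩; exact ⟨htx, hxb⟩
      · rintro ⟨htx, hxb⟩; exact ⟨⟨ht.1.trans_le htx, hxb⟩, htx⟩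
    rw [intervalIntegral.integral_of_le ht.2, ← integral_Icc_eq_integral_Ioc,
      ← integral_const_mul, ← hset, ← setIntegral_indicator measurableSet_Ici]
    simp only [F, indicator, mem_Ici]; rfl
  rw [intervalIntegral.integral_of_le hab, intervalIntegral.integral_of_le hab,
    setIntegral_congr_fun measurableSet_Ioc inner_left,
    setIntegral_congr_fun measurableSet_Ioc inner_right]
  exact integral_integral_swap hF

namespace ACWithDeriv

variable {g g' h h' : ℝ → ℂ}

theorem intervalIntegrable (hg : ACWithDeriv g g') : IntervalIntegrable g' volume 0 1 :=
  (intervalIntegrable_iff_integrableOn_Icc_of_le zero_le_one).2 hg.1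

theorem const_add (hg : ACWithDeriv g g') (c : ℂ) : ACWithDeriv (fun x => c + g x) g' :=
  ⟨hg.1, fun x hx => by beta_reduce; rw [hg.2 x hx, add_assoc]⟩

theorem continuousOn (hg : ACWithDeriv g g') : ContinuousOn g (Icc 0 1) := by
  have hprim := intervalIntegral.continuousOn_primitive_interval (a := 0) (b := 1) (f := g')
    (by rw [uIcc_of_le zero_le_one]; exact hg.1)
  rw [uIcc_of_le zero_le_one] at hprim
  exact (continuousOn_const.add hprim).congr hg.2

protected theorem star (hg : ACWithDeriv g g') :
    ACWithDeriv (fun x => star (g x)) (fun x => star (g' x)) := by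
  refine ⟨memLp_one_iff_integrable.1 (memLp_one_iff_integrable.2 hg.1).star, fun x hx => ?_⟩
  beta_reduce
  rw [hg.2 x hx, star_add]
  exact congrArg _ intervalIntegral.intervalIntegral_conj.symm

theorem congr_ae {g'' : ℝ → ℂ} (hg : ACWithDeriv g g')
    (h : g' =ᵐ[volume.restrict (Icc 0 1)] g'') : ACWithDeriv g g'' := by
  refine ⟨hg.1.congr_fun_ae h, fun x hx => ?_⟩
  rw [hg.2 x hx, intervalIntegral.integral_of_le hx.1, intervalIntegral.integral_of_le hx.1]
  exact congrArg _ (integral_congr_ae (ae_restrict_of_ae_restrict_of_subset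
    (Ioc_subset_Icc_self.trans (Icc_subset_Icc_right hx.2)) h))

theorem sub_eq_intervalIntegral (hg : ACWithDeriv g g') {x : ℝ} (hx : x ∈ Icc (0:ℝ) 1) :
    g 1 - g x = ∫ t in x..1, g' t := by
  rw [hg.2 1 (right_mem_Icc.2 zero_le_one), hg.2 x hx, add_sub_add_left_eq_sub,
    intervalIntegral.integral_interval_sub_left hg.intervalIntegrable
      (hg.intervalIntegrable.mono_set ?_)]
  rw [uIcc_of_le zero_le_one, uIcc_of_le hx.1]
  exact Icc_subset_Icc_right hx.2

theorem integral_mul_add_mul (hg : ACWithDeriv g g') (hh : ACWithDeriv h h') :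
    ∫ x in Icc (0:ℝ) 1, (g x * h' x + g' x * h x) = g 1 * h 1 - g 0 * h 0 := by
  have hgc := hg.continuousOn
  have hhc := hh.continuousOn
  rw [← uIcc_of_le zero_le_one] at hgc hhc
  have h0 : (0:ℝ) ∈ Icc (0:ℝ) 1 := left_mem_Icc.2 zero_le_one
  have hgh' : ∫ x in (0:ℝ)..1, g x * h' x
      = g 0 * (h 1 - h 0) + ∫ x in (0:ℝ)..1, (∫ t in (0:ℝ)..x, g' t) * h' x := by
    calc ∫ x in (0:ℝ)..1, g x * h' x
        = ∫ x in (0:ℝ)..1, (g 0 * h' x + (g x - g 0) * h' x) := by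
          congr 1; ext x; ring
      _ = g 0 * (h 1 - h 0) + ∫ x in (0:ℝ)..1, (g x - g 0) * h' x := by
          rw [intervalIntegral.integral_add (hh.intervalIntegrable.const_mul _)
            (hh.intervalIntegrable.continuousOn_mul (g := fun x => g x - g 0)
              (hgc.sub continuousOn_const)),
            intervalIntegral.integral_const_mul, hh.sub_eq_intervalIntegral h0]
      _ = _ := by
          refine congrArg _ (intervalIntegral.integral_congr fun x hx => ?_)
          rw [uIcc_of_le zero_le_one] at hx
          simp only [hg.2 x hx, add_sub_cancel_left]
  have hg'h : ∫ x in (0:ℝ)..1, g' x * h x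
      = h 1 * (g 1 - g 0) - ∫ t in (0:ℝ)..1, g' t * ∫ x in t..1, h' x := by
    calc ∫ x in (0:ℝ)..1, g' x * h x
        = ∫ x in (0:ℝ)..1, (h 1 * g' x - g' x * (h 1 - h x)) := by
          congr 1; ext x; ring
      _ = h 1 * (g 1 - g 0) - ∫ x in (0:ℝ)..1, g' x * (h 1 - h x) := by
          rw [intervalIntegral.integral_sub (hg.intervalIntegrable.const_mul _)
            (hg.intervalIntegrable.mul_continuousOn (g := fun x => h 1 - h x)
              (continuousOn_const.sub hhc)),
            intervalIntegral.integral_const_mul, hg.sub_eq_intervalIntegral h0]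
      _ = _ := by
          refine congrArg _ (intervalIntegral.integral_congr fun x hx => ?_)
          rw [uIcc_of_le zero_le_one] at hx
          simp only [hh.sub_eq_intervalIntegral hx]
  rw [integral_Icc_eq_integral_Ioc, ← intervalIntegral.integral_of_le zero_le_one,
    intervalIntegral.integral_add (hh.intervalIntegrable.continuousOn_mul hgc)
      (hg.intervalIntegrable.mul_continuousOn hhc), hgh', hg'h,
    intervalIntegral_primitive_mul zero_le_one (hg.1.mono_set Ioc_subset_Icc_self)
      (hh.1.mono_set Ioc_subset_Icc_self)]
  ring

end ACWithDeriv

theorem acWithDeriv_intervalIntegral {g : ℝ → ℂ} (hg : IntegrableOn g (Icc 0 1)) :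
    ACWithDeriv (fun x => ∫ t in (0:ℝ)..x, g t) g :=
  ⟨hg, fun x _ => by simp⟩

def HasPeriodicWeakDeriv (U G : ℝ → ℂ) : Prop :=
  ∀ z z' : ℝ → ℂ, ContinuousOn z' (Icc 0 1) →
    (∀ x ∈ Icc (0:ℝ) 1, z x = z 0 + ∫ t in (0:ℝ)..x, z' t) → z 0 = z 1 →
    ∫ x in Icc (0:ℝ) 1, (U x * star (z' x) + G x * star (z x)) = 0

section HasPeriodicWeakDeriv

variable {U G u : ℝ → ℂ}

theorem hasPeriodicWeakDeriv_of_ae_eq (hu : ACWithDeriv u G) (hper : u 0 = u 1)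
    (hUu : U =ᵐ[volume.restrict (Icc 0 1)] u) : HasPeriodicWeakDeriv U G := by
  intro z z' hz' hz hzper
  have hzAC : ACWithDeriv z z' := ⟨hz'.integrableOn_Icc, hz⟩
  calc ∫ x in Icc (0:ℝ) 1, (U x * star (z' x) + G x * star (z x))
      = ∫ x in Icc (0:ℝ) 1, (u x * star (z' x) + G x * star (z x)) := by
        refine integral_congr_ae ?_
        filter_upwards [hUu] with x hx
        rw [hx]
    _ = 0 := by rw [hu.integral_mul_add_mul hzAC.star, hper, hzper, sub_self]

theorem HasPeriodicWeakDeriv.exists_acWithDeriv (h : HasPeriodicWeakDeriv U G)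
    (hU : IntegrableOn U (Icc 0 1)) (hG : IntegrableOn G (Icc 0 1)) :
    ∃ u, ACWithDeriv u G ∧ u 0 = u 1 ∧ U =ᵐ[volume.restrict (Icc 0 1)] u := by
  have hG0 : ∫ x in Icc (0:ℝ) 1, G x = 0 := by
    simpa using h (fun _ => 1) 0 continuousOn_const (by simp) rfl
  set P : ℝ → ℂ := fun x => ∫ t in (0:ℝ)..x, G t
  have hP : ACWithDeriv P G := acWithDeriv_intervalIntegral hG
  have hP1 : P 1 = 0 := by
    rw [← hG0, integral_Icc_eq_integral_Ioc, ← intervalIntegral.integral_of_le zero_le_one]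
  have hUP : ∀ φ : ℝ → ℂ, Continuous φ → ∫ x in Icc (0:ℝ) 1, φ x = 0 →
      ∫ x in Icc (0:ℝ) 1, (U x - P x) * φ x = 0 := by
    intro φ hφ hφ0
    set z : ℝ → ℂ := fun x => ∫ t in (0:ℝ)..x, star (φ t)
    have hz : ACWithDeriv z (fun x => star (φ x)) :=
      acWithDeriv_intervalIntegral (continuous_star.comp hφ).integrableOn_Icc
    have hz1 : z 1 = 0 := by
      simp only [z, intervalIntegral.integral_of_le zero_le_one, ← integral_Icc_eq_integral_Ioc]
      exact integral_conj.trans ((congrArg _ hφ0).trans (map_zero _))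
    have hweak := h z (fun x => star (φ x)) (continuous_star.comp hφ).continuousOn hz.2
      (by rw [hz1]; simp [z])
    simp only [star_star] at hweak
    have hparts : ∫ x in Icc (0:ℝ) 1, (P x * φ x + G x * star (z x)) = 0 := by
      simpa [hP1, hz1, P] using hP.integral_mul_add_mul hz.star
    have hGz : IntegrableOn (fun x => G x * star (z x)) (Icc 0 1) :=
      hG.mul_continuousOn hz.star.continuousOn isCompact_Icc
    have hUφ : IntegrableOn (fun x => U x * φ x + G x * star (z x)) (Icc 0 1) :=
      (hU.mul_continuousOn hφ.continuousOn isCompact_Icc).add hGz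
    have hPφ : IntegrableOn (fun x => P x * φ x + G x * star (z x)) (Icc 0 1) :=
      ((hP.continuousOn.mul hφ.continuousOn).integrableOn_Icc).add hGz
    calc ∫ x in Icc (0:ℝ) 1, (U x - P x) * φ x
        = ∫ x in Icc (0:ℝ) 1,
            ((U x * φ x + G x * star (z x)) - (P x * φ x + G x * star (z x))) := by
          congr 1; ext x; ring
      _ = 0 := by
          rw [integral_sub hUφ hPφ, hweak, hparts, sub_zero]
  have hae := ae_eq_average_of_integral_mul_eq_zero (W := fun x => U x - P x)
    (hU.sub hP.continuousOn.integrableOn_Icc) hUP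
  refine ⟨fun x => (⨍ x in Icc (0:ℝ) 1, U x - P x) + P x, hP.const_add _, by simp [P, hP1], ?_⟩
  filter_upwards [hae] with x hx
  rw [← hx]; ring

theorem hasPeriodicWeakDeriv_iff (hU : IntegrableOn U (Icc 0 1)) (hG : IntegrableOn G (Icc 0 1)) :
    HasPeriodicWeakDeriv U G ↔
      ∃ u, ACWithDeriv u G ∧ u 0 = u 1 ∧ U =ᵐ[volume.restrict (Icc 0 1)] u :=
  ⟨fun h => h.exists_acWithDeriv hU hG, fun ⟨_, hu, hper, hUu⟩ =>
    hasPeriodicWeakDeriv_of_ae_eq hu hper hUu⟩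

theorem hasPeriodicWeakDeriv_neg_sub_iff {A F : ℝ → ℂ} (hU : IntegrableOn U (Icc 0 1))
    (hA : IntegrableOn A (Icc 0 1)) (hF : IntegrableOn F (Icc 0 1)) :
    HasPeriodicWeakDeriv U (fun x => -A x - F x) ↔
      ∀ z z' : ℝ → ℂ, ContinuousOn z' (Icc 0 1) →
        (∀ x ∈ Icc (0:ℝ) 1, z x = z 0 + ∫ t in (0:ℝ)..x, z' t) → z 0 = z 1 →
        ∫ x in Icc (0:ℝ) 1, (U x * star (z' x) - A x * star (z x))
          = ∫ x in Icc (0:ℝ) 1, F x * star (z x) := by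
  refine forall₂_congr fun z z' => imp_congr_right fun hz' => imp_congr_right fun hz =>
    imp_congr_right fun _ => Iff.symm ?_
  have hzc : ContinuousOn (fun x => star (z x)) (Icc 0 1) :=
    (ACWithDeriv.star ⟨hz'.integrableOn_Icc, hz⟩).continuousOn
  have hUA : IntegrableOn (fun x => U x * star (z' x) - A x * star (z x)) (Icc 0 1) :=
    (hU.mul_continuousOn (continuous_star.comp_continuousOn hz') isCompact_Icc).sub
      (hA.mul_continuousOn hzc isCompact_Icc)
  rw [← sub_eq_zero, ← integral_sub hUA (hF.mul_continuousOn hzc isCompact_Icc)]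
  congr! 3 with x
  ring

end HasPeriodicWeakDeriv

theorem stmt15_general
    (p q : ℝ → ℂ)
    (hp : IntegrableOn p (Set.Icc 0 1)) (hq : IntegrableOn q (Set.Icc 0 1))
    (f : ℝ → ℂ) (hf : MemLp f 2 (volume.restrict (Set.Icc 0 1)))
    (y y' y'' : ℝ → ℂ)
    (hy : ACWithDeriv y y') (hy' : ACWithDeriv y' y'') :
    -- (a) the integral identity holds for all C¹ test functions z with z(0)=z(1)
    (∀ z z' : ℝ → ℂ, ContinuousOn z' (Set.Icc 0 1) →
      (∀ x ∈ Set.Icc (0:ℝ) 1, z x = z 0 + ∫ t in (0:ℝ)..x, z' t) →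
      z 0 = z 1 →
      (∫ x in Set.Icc (0:ℝ) 1,
          ((Complex.I * y'' x + p x * y' x - q x * y x) * star (z' x)
            - q x * y' x * star (z x)))
        = ∫ x in Set.Icc (0:ℝ) 1, f x * star (z x))
    ↔
    -- (b) the first-order system holds
    (∃ u u' : ℝ → ℂ, ACWithDeriv u u' ∧ u 0 = u 1 ∧
      (∀ᵐ x ∂(volume.restrict (Set.Icc 0 1)),
        y'' x = -Complex.I * q x * y x + Complex.I * p x * y' x - Complex.I * u x ∧
        u' x = -(q x) * y' x - f x)) := by
  set U : ℝ → ℂ := fun x => Complex.I * y'' x + p x * y' x - q x * y x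
  have hfi : IntegrableOn f (Icc 0 1) := hf.integrable one_le_two
  have hU : IntegrableOn U (Icc 0 1) :=
    ((hy'.1.const_mul _).add (hp.mul_continuousOn hy'.continuousOn isCompact_Icc)).sub
      (hq.mul_continuousOn hy.continuousOn isCompact_Icc)
  have hqy' : IntegrableOn (fun x => q x * y' x) (Icc 0 1) :=
    hq.mul_continuousOn hy'.continuousOn isCompact_Icc
  refine (hasPeriodicWeakDeriv_neg_sub_iff hU hqy' hfi).symm.trans
    ((hasPeriodicWeakDeriv_iff hU (hqy'.neg.sub hfi :
      IntegrableOn (fun x => -(q x * y' x) - f x) _)).trans ⟨?_, ?_⟩)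
  · rintro ⟨u, hu, hper, hUu⟩
    refine ⟨u, _, hu, hper, ?_⟩
    filter_upwards [hUu] with x hx
    exact ⟨by linear_combination (-Complex.I) * hx + y'' x * Complex.I_sq, by ring⟩
  · rintro ⟨u, u', hu, hper, hae⟩
    refine ⟨u, hu.congr_ae ?_, hper, ?_⟩
    · filter_upwards [hae] with x hx
      rw [hx.2, neg_mul]
    · filter_upwards [hae] with x hx
      linear_combination Complex.I * hx.1 + (p x * y' x - q x * y x - u x) * Complex.I_sq

theorem stmt15
    (p q : ℝ → ℂ)
    (hp : IntegrableOn p (Set.Icc 0 1)) (hq : IntegrableOn q (Set.Icc 0 1))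
    (f : ℝ → ℂ) (hf : MemLp f 2 (volume.restrict (Set.Icc 0 1)))
    (y y' y'' : ℝ → ℂ)
    (hy : ACWithDeriv y y') (hy' : ACWithDeriv y' y'')
    (hy'' : IntegrableOn y'' (Set.Icc 0 1))
    (hbc : y 0 = y 1 ∧ y' 0 = y' 1) :
    -- (a) the integral identity holds for all C¹ test functions z with z(0)=z(1)
    (∀ z z' : ℝ → ℂ, ContinuousOn z' (Set.Icc 0 1) →
      (∀ x ∈ Set.Icc (0:ℝ) 1, z x = z 0 + ∫ t in (0:ℝ)..x, z' t) →
      z 0 = z 1 →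
      (∫ x in Set.Icc (0:ℝ) 1,
          ((Complex.I * y'' x + p x * y' x - q x * y x) * star (z' x)
            - q x * y' x * star (z x)))
        = ∫ x in Set.Icc (0:ℝ) 1, f x * star (z x))
    ↔
    -- (b) the first-order system holds
    (∃ u u' : ℝ → ℂ, ACWithDeriv u u' ∧ u 0 = u 1 ∧
      (∀ᵐ x ∂(volume.restrict (Set.Icc 0 1)),
        y'' x = -Complex.I * q x * y x + Complex.I * p x * y' x - Complex.I * u x ∧
        u' x = -(q x) * y' x - f x)) :=
  stmt15_general p q hp hq f hf y y' y'' hy hy'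

end
end
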